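/- arXiv:1709.03865 — 3 statements merged into one kernel-verified Lean document; each statement's English description precedes it below -/
import Mathlib

section
/- Let S be an S-tree with A-set F_A(S). Then the number of maximum matchings of S equals the product over A ∈ F_A(S) of the number of maximum matchings of A: m(S) = ∏_{A ∈ F_A(S)} m(A). -/
open scoped Classical

open SimpleGraph Matrix

noncomputable section

variable {V : Type*}

/-- The real adjacency matrix of a simple graph. -/
def adjMat [Fintype V] (G : SimpleGraph V) : Matrix V V ℝ :=
  Matrix.of fun a b => if G.Adj a b then (1 : ℝ) else 0

/-- Support of the null space of the adjacency matrix. -/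
def suppSet [Fintype V] (G : SimpleGraph V) : Set V :=
  {v | ∃ x : V → ℝ, adjMat G *ᵥ x = 0 ∧ x v ≠ 0}

/-- Core: the set of neighbors of supported vertices. -/
def coreSet [Fintype V] (G : SimpleGraph V) : Set V :=
  {v | ∃ u ∈ suppSet G, G.Adj u v}

/-- An S-tree: a tree in which the closed neighborhood of the support is everything. -/
def IsSTree [Fintype V] (G : SimpleGraph V) : Prop :=
  G.IsTree ∧ suppSet G ∪ coreSet G = Set.univ

/-- Nullity of a graph: dimension of the kernel of its adjacency matrix. -/
def nullity [Fintype V] (G : SimpleGraph V) : ℕ :=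
  Module.finrank ℝ (LinearMap.ker (adjMat G).mulVecLin)

/-- Rank of a graph: rank of its adjacency matrix. -/
def rankA [Fintype V] (G : SimpleGraph V) : ℕ :=
  (adjMat G).rank

/-- Matching number: the maximum cardinality of a matching. -/
def matchingNumber [Fintype V] (G : SimpleGraph V) : ℕ :=
  sSup {n | ∃ M : G.Subgraph, M.IsMatching ∧ M.edgeSet.ncard = n}

/-- The set of maximum matchings. -/
def maxMatchings [Fintype V] (G : SimpleGraph V) : Set G.Subgraph :=
  {M | M.IsMatching ∧ M.edgeSet.ncard = matchingNumber G}

/-- The number of maximum matchings. -/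
def numMaxMatchings [Fintype V] (G : SimpleGraph V) : ℕ :=
  (maxMatchings G).ncard

/-- Independence number. -/
def indepNumber [Fintype V] (G : SimpleGraph V) : ℕ :=
  sSup {n | ∃ s : Set V, (∀ a ∈ s, ∀ b ∈ s, ¬ G.Adj a b) ∧ s.ncard = n}

set_option linter.unusedSectionVars false

namespace STree17

variable {V : Type*} [Fintype V]

/-- neighbors of `w` inside `s`. -/
def nbrs (G : SimpleGraph V) (s : Set V) (w : V) : Finset V :=
  Finset.univ.filter (fun z => z ∈ s ∧ G.Adj w z)

lemma mem_nbrs {G : SimpleGraph V} {s : Set V} {w z : V} :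
    z ∈ nbrs G s w ↔ z ∈ s ∧ G.Adj w z := by simp [nbrs]

/-- row sum of the adjacency matrix restricted to `s`. -/
def rowSum (G : SimpleGraph V) (s : Set V) (x : V → ℝ) (w : V) : ℝ :=
  ∑ z ∈ nbrs G s w, x z

def kerOn (G : SimpleGraph V) (s : Set V) (x : V → ℝ) : Prop :=
  (∀ v, v ∉ s → x v = 0) ∧ ∀ w ∈ s, rowSum G s x w = 0

def suppOn (G : SimpleGraph V) (s : Set V) : Set V :=
  {v | v ∈ s ∧ ∃ x, kerOn G s x ∧ x v ≠ 0}

def coreOn (G : SimpleGraph V) (s : Set V) : Set V :=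
  {v | v ∈ s ∧ ∃ u ∈ suppOn G s, G.Adj u v}

/-- `ℓ` is a leaf of the graph induced on `s`, with unique neighbor `p`. -/
def IsLeafOn (G : SimpleGraph V) (s : Set V) (ℓ p : V) : Prop :=
  ℓ ∈ s ∧ p ∈ s ∧ G.Adj ℓ p ∧ ∀ z ∈ s, G.Adj ℓ z → z = p

/-- The head of a maximal path inside `s` is a leaf on `s`. -/
lemma head_isLeafOn {G : SimpleGraph V} (hG : G.IsAcyclic) {s : Set V} {x x' y : V}
    (h : G.Adj x x') (q : G.Walk x' y) (hp : (SimpleGraph.Walk.cons h q).IsPath)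
    (hsup : ∀ v ∈ (SimpleGraph.Walk.cons h q).support, v ∈ s)
    (hmax : ∀ z ∈ s, G.Adj x z → z ∈ (SimpleGraph.Walk.cons h q).support) :
    IsLeafOn G s x x' := by
  set w : G.Walk x y := SimpleGraph.Walk.cons h q with hw
  refine ⟨hsup x (by simp [hw]), hsup x' (by simp [hw]), h, ?_⟩
  intro z hz hxz
  have hzsup : z ∈ w.support := hmax z hz hxz
  -- takeUntil gives a path from x to z inside w
  have hp1 : (w.takeUntil z hzsup).IsPath := hp.takeUntil hzsup
  -- the one-edge path from x to z
  have hzx : z ≠ x := fun hzx => G.loopless.irrefl x (hzx ▸ hxz)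
  have hp2 : (SimpleGraph.Walk.cons hxz (SimpleGraph.Walk.nil)).IsPath := by
    simp [SimpleGraph.Walk.isPath_def, hzx.symm]
  have := SimpleGraph.isAcyclic_iff_path_unique.mp hG ⟨_, hp1⟩ ⟨_, hp2⟩
  have heq : w.takeUntil z hzsup = SimpleGraph.Walk.cons hxz SimpleGraph.Walk.nil := by
    simpa using congrArg Subtype.val this
  -- so the support of w starts x :: z :: _
  have h1 := congrArg SimpleGraph.Walk.support (w.take_spec hzsup)
  rw [SimpleGraph.Walk.support_append, heq] at h1
  simp only [SimpleGraph.Walk.support_cons, SimpleGraph.Walk.support_nil] at h1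
  have h2 : w.support = x :: x' :: q.support.tail := by
    rw [hw, SimpleGraph.Walk.support_cons, q.support_eq_cons]; rfl
  rw [h2] at h1
  have := (List.cons.injEq _ _ _ _).mp h1
  exact ((List.cons.injEq _ _ _ _).mp this.2).1
/-- head of a globally longest path in `s` is a leaf on `s`. -/
lemma head_isLeafOn_of_max {G : SimpleGraph V} (hG : G.IsAcyclic) {s : Set V} {x y : V}
    (w : G.Walk x y) (hp : w.IsPath) (hs : ∀ v ∈ w.support, v ∈ s)
    (hlen : ∀ (x' y' : V) (w' : G.Walk x' y'), w'.IsPath → (∀ v ∈ w'.support, v ∈ s) →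
      w'.length ≤ w.length)
    (hpos : w.length ≠ 0) : ∃ p, IsLeafOn G s x p := by
  cases w with
  | nil => simp at hpos
  | cons h q =>
    refine ⟨_, head_isLeafOn hG h q hp hs ?_⟩
    intro z hz hxz
    by_contra hzs
    have hp' : (SimpleGraph.Walk.cons hxz.symm (SimpleGraph.Walk.cons h q)).IsPath := by
      rw [SimpleGraph.Walk.cons_isPath_iff]
      exact ⟨hp, hzs⟩
    have := hlen _ _ _ hp' (by
      intro v hv
      rcases (by simpa [SimpleGraph.Walk.support_cons] using hv : v = z ∨
        v ∈ (SimpleGraph.Walk.cons h q).support) with rfl | hv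
      · exact hz
      · exact hs _ hv)
    simp [SimpleGraph.Walk.length_cons] at this

/-- a forest whose restriction to `s` contains an edge has two distinct leaves on `s`. -/
lemma exists_two_leaves {G : SimpleGraph V} (hG : G.IsAcyclic) {s : Set V} {a b : V}
    (ha : a ∈ s) (hb : b ∈ s) (hab : G.Adj a b) :
    ∃ ℓ₁ p₁ ℓ₂ p₂, IsLeafOn G s ℓ₁ p₁ ∧ IsLeafOn G s ℓ₂ p₂ ∧ ℓ₁ ≠ ℓ₂ := by
  classical
  set T : Set ℕ := {n | ∃ (x y : V) (w : G.Walk x y), w.IsPath ∧ (∀ v ∈ w.support, v ∈ s) ∧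
    w.length = n} with hT
  have hne : 1 ∈ T := by
    refine ⟨a, b, SimpleGraph.Walk.cons hab SimpleGraph.Walk.nil, ?_, ?_, rfl⟩
    · simp [SimpleGraph.Walk.isPath_def, hab.ne]
    · intro v hv
      rcases (by simpa using hv : v = a ∨ v = b) with rfl | rfl <;> assumption
  have hbdd : BddAbove T := by
    refine ⟨Fintype.card V, ?_⟩
    rintro n ⟨x, y, w, hw, -, rfl⟩
    exact le_of_lt hw.length_lt
  obtain ⟨x, y, w, hw, hws, hwl⟩ := Nat.sSup_mem ⟨1, hne⟩ hbdd
  have hlen : ∀ (x' y' : V) (w' : G.Walk x' y'), w'.IsPath → (∀ v ∈ w'.support, v ∈ s) →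
      w'.length ≤ w.length := by
    intro x' y' w' h1 h2
    rw [hwl]
    exact le_csSup hbdd ⟨x', y', w', h1, h2, rfl⟩
  have hpos : w.length ≠ 0 := by
    rw [hwl]
    have := le_csSup hbdd hne
    omega
  obtain ⟨p₁, hl1⟩ := head_isLeafOn_of_max hG w hw hws hlen hpos
  obtain ⟨p₂, hl2⟩ := head_isLeafOn_of_max hG w.reverse hw.reverse
    (by intro v hv; exact hws v (by simpa using hv)) (by
      intro x' y' w' h1 h2
      simpa using hlen x' y' w' h1 h2) (by simpa using hpos)
  refine ⟨x, p₁, y, p₂, hl1, hl2, ?_⟩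
  intro hxy
  subst hxy
  rw [SimpleGraph.Walk.isPath_iff_eq_nil] at hw
  subst hw
  simp at hpos

/-- nbrs after removing two vertices. -/
lemma nbrs_diff {G : SimpleGraph V} {s : Set V} {ℓ p w : V} :
    nbrs G (s \ {ℓ, p}) w = (nbrs G s w).filter (fun z => z ≠ ℓ ∧ z ≠ p) := by
  ext z
  simp [mem_nbrs, Finset.mem_filter]
  tauto

/-- Key lemma Q: in a forest, if `A|_s y = c · e_r` with `c ≠ 0`, then `y r = 0`. -/
lemma Qlemma {G : SimpleGraph V} (hG : G.IsAcyclic) (s : Set V) {r : V} (hr : r ∈ s)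
    {c : ℝ} (hc : c ≠ 0) (y : V → ℝ)
    (hrow : ∀ w ∈ s, rowSum G s y w = if w = r then c else 0) :
    y r = 0 := by
  classical
  generalize hn : s.ncard = n at *
  induction n using Nat.strong_induction_on generalizing s r c y with
  | _ n ih =>
  subst hn
  by_cases hedge : ∃ a ∈ s, ∃ b ∈ s, G.Adj a b
  · obtain ⟨a, ha, b, hb, hab⟩ := hedge
    obtain ⟨ℓ₁, p₁, ℓ₂, p₂, hl1, hl2, hne⟩ := exists_two_leaves hG ha hb hab
    -- pick a leaf different from r
    obtain ⟨ℓ, p, hl, hlr⟩ : ∃ ℓ p, IsLeafOn G s ℓ p ∧ ℓ ≠ r := by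
      by_cases h1 : ℓ₁ = r
      · exact ⟨ℓ₂, p₂, hl2, by rw [← h1]; exact hne.symm⟩
      · exact ⟨ℓ₁, p₁, hl1, h1⟩
    obtain ⟨hls, hps, hlp, huniq⟩ := hl
    -- row ℓ gives y p = 0
    have hnl : nbrs G s ℓ = {p} := by
      ext z
      simp only [mem_nbrs, Finset.mem_singleton]
      constructor
      · rintro ⟨hz, hadj⟩; exact huniq z hz hadj
      · rintro rfl; exact ⟨hps, hlp⟩
    have hyp : y p = 0 := by
      have := hrow ℓ hls
      rw [if_neg hlr] at this
      simpa [rowSum, hnl] using this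
    by_cases hpr : p = r
    · rw [← hpr]; exact hyp
    -- recurse on s \ {ℓ, p}
    · set s' := s \ {ℓ, p} with hs'
      have hrs' : r ∈ s' := by
        refine ⟨hr, ?_⟩
        simp only [Set.mem_insert_iff, Set.mem_singleton_iff]
        push_neg
        exact ⟨fun h => hlr h.symm, fun h => hpr h.symm⟩
      have hrow' : ∀ w ∈ s', rowSum G s' y w = if w = r then c else 0 := by
        intro w hw
        rw [← hrow w hw.1]
        unfold rowSum
        rw [nbrs_diff]
        refine Finset.sum_filter_of_ne ?_
        intro z hz hyz
        constructor
        · rintro rfl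
          -- z = ℓ ∈ nbrs s w means Adj w ℓ so w = p, contradiction
          have : w = p := huniq w hw.1 (mem_nbrs.mp hz).2.symm
          exact absurd this (by simp [hs'] at hw; exact hw.2.2)
        · rintro rfl
          exact hyz hyp
      have hcard : s'.ncard < s.ncard := by
        apply Set.ncard_lt_ncard _ s.toFinite
        constructor
        · exact Set.diff_subset
        · intro hsub
          exact ((hsub hls).2 (by simp))
      have := ih s'.ncard hcard s' hrs' hc y hrow' rfl
      exact this
  · -- no edges: row r is an empty sum, contradiction
    exfalso
    have := hrow r hr
    rw [if_pos rfl] at this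
    have hempty : nbrs G s r = ∅ := by
      ext z
      simp only [mem_nbrs, Finset.notMem_empty, iff_false]
      rintro ⟨hz, hadj⟩
      exact hedge ⟨r, hr, z, hz, hadj⟩
    rw [rowSum, hempty] at this
    simp at this
    exact hc this.symm

/-- Claim K: a kernel vector on a forest cannot be nonzero at both ends of an edge. -/
lemma kerOn_adj {G : SimpleGraph V} (hG : G.IsAcyclic) {s : Set V} {x : V → ℝ}
    (hx : kerOn G s x) {u v : V} (hu : u ∈ s) (hv : v ∈ s) (huv : G.Adj u v)
    (hxu : x u ≠ 0) : x v = 0 := by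
  classical
  -- t = the side of v in the forest restricted to s minus u
  set t : Set V := {w | w ∈ s ∧ w ≠ u ∧ ∃ W : G.Walk v w, ∀ z ∈ W.support, z ∈ s ∧ z ≠ u}
    with ht
  have hvt : v ∈ t := ⟨hv, huv.ne', SimpleGraph.Walk.nil, by simp [hv, huv.ne']⟩
  -- any member of t adjacent to u must be v
  have hkey : ∀ w ∈ t, G.Adj u w → w = v := by
    rintro w ⟨hws, hwu, W, hW⟩ hadj
    by_contra hwv
    -- two distinct paths from u to w
    have hP := W.toPath
    have hPsup : ∀ z ∈ (W.toPath : G.Walk v w).support, z ∈ s ∧ z ≠ u := by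
      intro z hz
      exact hW z (SimpleGraph.Walk.support_toPath_subset W hz)
    have hQ : (SimpleGraph.Walk.cons huv (W.toPath : G.Walk v w)).IsPath := by
      rw [SimpleGraph.Walk.cons_isPath_iff]
      exact ⟨(W.toPath).2, fun h => (hPsup u h).2 rfl⟩
    have hE : (SimpleGraph.Walk.cons hadj (SimpleGraph.Walk.nil : G.Walk w w)).IsPath := by
      simp [SimpleGraph.Walk.isPath_def, hadj.ne]
    have := SimpleGraph.isAcyclic_iff_path_unique.mp hG ⟨_, hQ⟩ ⟨_, hE⟩
    have heq := congrArg (fun P : G.Path u w => (P : G.Walk u w).support) this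
    simp only [SimpleGraph.Walk.support_cons, SimpleGraph.Walk.support_nil] at heq
    -- v occurs in lhs support but not in [u, w]
    have hvmem : v ∈ (SimpleGraph.Walk.cons huv (W.toPath : G.Walk v w)).support := by
      simp [SimpleGraph.Walk.support_cons]
    rw [show (SimpleGraph.Walk.cons huv (W.toPath : G.Walk v w)).support
      = u :: (W.toPath : G.Walk v w).support from rfl] at hvmem
    rw [heq] at hvmem
    simp at hvmem
    rcases hvmem with h | h
    · exact huv.ne' h
    · exact hwv h.symm
  -- rows on t
  have hrow : ∀ w ∈ t, rowSum G t x w = if w = v then -x u else 0 := by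
    intro w hwt
    obtain ⟨hws, hwu, W, hW⟩ := hwt
    have hnb : nbrs G t w = (nbrs G s w).erase u := by
      ext z
      simp only [mem_nbrs, Finset.mem_erase]
      constructor
      · rintro ⟨⟨hzs, hzu, -⟩, hadj⟩
        exact ⟨hzu, hzs, hadj⟩
      · rintro ⟨hzu, hzs, hadj⟩
        exact ⟨⟨hzs, hzu, W.concat hadj, by
          intro a ha
          rw [SimpleGraph.Walk.support_concat] at ha
          rcases List.mem_append.mp ha with h | h
          · exact hW a h
          · simp at h; subst h; exact ⟨hzs, hzu⟩⟩, hadj⟩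
    have hsplit : rowSum G s x w = rowSum G t x w + (if u ∈ nbrs G s w then x u else 0) := by
      unfold rowSum
      rw [hnb]
      by_cases hmem : u ∈ nbrs G s w
      · rw [if_pos hmem, Finset.sum_erase_add _ _ hmem]
      · rw [if_neg hmem, Finset.erase_eq_of_notMem hmem, add_zero]
    have hz := hx.2 w hws
    by_cases hwv : w = v
    · subst hwv
      rw [if_pos rfl]
      have : u ∈ nbrs G s w := mem_nbrs.mpr ⟨hu, huv.symm⟩
      rw [hz, if_pos this] at hsplit
      linarith
    · rw [if_neg hwv]
      have : u ∉ nbrs G s w := by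
        rw [mem_nbrs]
        rintro ⟨-, hadj⟩
        exact hwv (hkey w ⟨hws, hwu, W, hW⟩ hadj.symm)
      rw [hz, if_neg this] at hsplit
      linarith
  exact Qlemma hG t hvt (neg_ne_zero.mpr hxu) x hrow

lemma kerOn_add {G : SimpleGraph V} {s : Set V} {x y : V → ℝ}
    (hx : kerOn G s x) (hy : kerOn G s y) : kerOn G s (x + y) := by
  refine ⟨fun v hv => by simp [hx.1 v hv, hy.1 v hv], fun w hw => ?_⟩
  have : rowSum G s (x + y) w = rowSum G s x w + rowSum G s y w := by
    unfold rowSum; simp [Finset.sum_add_distrib]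
  rw [this, hx.2 w hw, hy.2 w hw, add_zero]

/-- the support on a forest is independent. -/
lemma suppOn_indep {G : SimpleGraph V} (hG : G.IsAcyclic) {s : Set V} {u v : V}
    (hu : u ∈ suppOn G s) (hv : v ∈ suppOn G s) : ¬ G.Adj u v := by
  intro hadj
  obtain ⟨hus, x, hx, hxu⟩ := hu
  obtain ⟨hvs, y, hy, hyv⟩ := hv
  have hxv : x v = 0 := kerOn_adj hG hx hus hvs hadj hxu
  have hyu : y u = 0 := kerOn_adj hG hy hvs hus hadj.symm hyv
  have hsum := kerOn_add hx hy
  have h1 : (x + y) u ≠ 0 := by simp [hyu, hxu]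
  have h2 : (x + y) v = 0 := kerOn_adj hG hsum hus hvs hadj h1
  simp [hxv] at h2
  exact hyv h2

/-- support and core are disjoint on a forest. -/
lemma suppOn_inter_coreOn {G : SimpleGraph V} (hG : G.IsAcyclic) (s : Set V) :
    suppOn G s ∩ coreOn G s = ∅ := by
  ext v
  simp only [Set.mem_inter_iff, Set.mem_empty_iff_false, iff_false]
  rintro ⟨hv, -, u, hu, hadj⟩
  exact suppOn_indep hG hu hv hadj

/-! ### Matchings as finsets of edges -/

def MatchOn (G : SimpleGraph V) (s : Set V) (E : Finset (Sym2 V)) : Prop :=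
  (∀ e ∈ E, e ∈ G.edgeSet ∧ ∀ v ∈ e, v ∈ s) ∧
    ∀ e ∈ E, ∀ f ∈ E, e ≠ f → ∀ v, v ∈ e → v ∉ f

def matchSizes (G : SimpleGraph V) (s : Set V) : Set ℕ :=
  {n | ∃ E, MatchOn G s E ∧ E.card = n}

def muOn (G : SimpleGraph V) (s : Set V) : ℕ := sSup (matchSizes G s)

lemma matchOn_empty (G : SimpleGraph V) (s : Set V) : MatchOn G s ∅ := by
  constructor <;> simp

lemma matchSizes_nonempty (G : SimpleGraph V) (s : Set V) : (matchSizes G s).Nonempty :=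
  ⟨0, ∅, matchOn_empty G s, rfl⟩

lemma matchSizes_bddAbove (G : SimpleGraph V) (s : Set V) : BddAbove (matchSizes G s) := by
  refine ⟨Fintype.card (Sym2 V), ?_⟩
  rintro n ⟨E, -, rfl⟩
  exact Finset.card_le_univ E

lemma muOn_mem (G : SimpleGraph V) (s : Set V) : muOn G s ∈ matchSizes G s :=
  Nat.sSup_mem (matchSizes_nonempty G s) (matchSizes_bddAbove G s)

lemma le_muOn {G : SimpleGraph V} {s : Set V} {E : Finset (Sym2 V)} (h : MatchOn G s E) :
    E.card ≤ muOn G s :=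
  le_csSup (matchSizes_bddAbove G s) ⟨E, h, rfl⟩

/-! ### pendant transfer lemmas -/

section Pendant

variable {G : SimpleGraph V} {s : Set V} {ℓ p : V}

/-- restriction of a kernel vector after removing a pendant pair. -/
lemma kerOn_pendant (hl : IsLeafOn G s ℓ p) {x : V → ℝ} (hx : kerOn G s x) :
    kerOn G (s \ {ℓ, p}) (fun v => if v ∈ s \ {ℓ, p} then x v else 0) := by
  obtain ⟨hls, hps, hlp, huniq⟩ := hl
  have hnl : nbrs G s ℓ = {p} := by
    ext z
    simp only [mem_nbrs, Finset.mem_singleton]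
    exact ⟨fun ⟨hz, hadj⟩ => huniq z hz hadj, fun h => h ▸ ⟨hps, hlp⟩⟩
  have hxp : x p = 0 := by
    have := hx.2 ℓ hls
    simpa [rowSum, hnl] using this
  refine ⟨fun v hv => if_neg hv, fun w hw => ?_⟩
  have : rowSum G (s \ {ℓ, p}) (fun v => if v ∈ s \ {ℓ, p} then x v else 0) w
      = rowSum G (s \ {ℓ, p}) x w := by
    unfold rowSum
    apply Finset.sum_congr rfl
    intro z hz
    exact if_pos (mem_nbrs.mp hz).1
  rw [this]
  rw [← hx.2 w hw.1]
  unfold rowSum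
  rw [nbrs_diff]
  refine Finset.sum_filter_of_ne ?_
  intro z hz hyz
  constructor
  · rintro rfl
    have : w = p := huniq w hw.1 (mem_nbrs.mp hz).2.symm
    exact absurd this (by
      intro h
      exact hw.2 (by simp [h]))
  · rintro rfl
    exact hyz hxp

lemma p_not_supp (hl : IsLeafOn G s ℓ p) : p ∉ suppOn G s := by
  obtain ⟨hls, hps, hlp, huniq⟩ := hl
  rintro ⟨-, x, hx, hxp⟩
  have hnl : nbrs G s ℓ = {p} := by
    ext z
    simp only [mem_nbrs, Finset.mem_singleton]
    exact ⟨fun ⟨hz, hadj⟩ => huniq z hz hadj, fun h => h ▸ ⟨hps, hlp⟩⟩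
  have := hx.2 ℓ hls
  rw [rowSum, hnl] at this
  simp at this
  exact hxp this

lemma leaf_supp (hl : IsLeafOn G s ℓ p) (hScov : s ⊆ suppOn G s ∪ coreOn G s) :
    ℓ ∈ suppOn G s := by
  rcases hScov hl.1 with h | h
  · exact h
  · exfalso
    obtain ⟨-, u, hu, hadj⟩ := h
    exact p_not_supp hl (hl.2.2.2 u hu.1 hadj.symm ▸ hu)

lemma supp_pendant (hl : IsLeafOn G s ℓ p) {v : V} (hv : v ∈ suppOn G s)
    (hv' : v ∈ s \ {ℓ, p}) : v ∈ suppOn G (s \ {ℓ, p}) := by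
  obtain ⟨-, x, hx, hxv⟩ := hv
  exact ⟨hv', _, kerOn_pendant hl hx, by rw [if_pos hv']; exact hxv⟩

lemma core_pendant (hl : IsLeafOn G s ℓ p) {v : V} (hv : v ∈ coreOn G s)
    (hv' : v ∈ s \ {ℓ, p}) : v ∈ coreOn G (s \ {ℓ, p}) := by
  obtain ⟨hvs, u, hu, hadj⟩ := hv
  have hup : u ≠ p := fun h => p_not_supp hl (h ▸ hu)
  have hul : u ≠ ℓ := by
    rintro rfl
    exact absurd (hl.2.2.2 v hvs hadj) (by
      intro h
      exact hv'.2 (by simp [h]))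
  have hus : u ∈ s \ {ℓ, p} := ⟨hu.1, by simp [hul, hup]⟩
  exact ⟨hv', u, supp_pendant hl hu hus, hadj⟩

end Pendant

/-- μ ≥ |core| on S-forests, by pendant induction. -/
lemma core_le_muOn {G : SimpleGraph V} (hG : G.IsAcyclic) (s : Set V)
    (hScov : s ⊆ suppOn G s ∪ coreOn G s) :
    (coreOn G s).ncard ≤ muOn G s := by
  classical
  generalize hn : s.ncard = n
  induction n using Nat.strong_induction_on generalizing s with
  | _ n ih =>
  subst hn
  by_cases hedge : ∃ a ∈ s, ∃ b ∈ s, G.Adj a b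
  · obtain ⟨a, ha, b, hb, hab⟩ := hedge
    obtain ⟨ℓ, p, -, -, hl, -, -⟩ := exists_two_leaves hG ha hb hab
    set s' := s \ {ℓ, p} with hs'
    have hlns : ℓ ∉ s' := fun h => h.2 (by simp)
    have hpns : p ∉ s' := fun h => h.2 (by simp)
    have hlsupp : ℓ ∈ suppOn G s := leaf_supp hl hScov
    have hpcore : p ∈ coreOn G s := ⟨hl.2.1, ℓ, hlsupp, hl.2.2.1⟩
    have hlncore : ℓ ∉ coreOn G s := by
      rintro ⟨-, u, hu, hadj⟩
      exact p_not_supp hl (hl.2.2.2 u hu.1 hadj.symm ▸ hu)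
    -- core of s' covers core of s minus p
    have hcore_sub : coreOn G s \ {p} ⊆ coreOn G s' := by
      rintro v ⟨hv, hvp⟩
      have hvl : v ≠ ℓ := fun h => hlncore (h ▸ hv)
      exact core_pendant hl hv ⟨hv.1, by simp [hvl, (by simpa using hvp : v ≠ p)]⟩
    -- S-property for s'
    have hScov' : s' ⊆ suppOn G s' ∪ coreOn G s' := by
      intro v hv
      rcases hScov hv.1 with h | h
      · exact Or.inl (supp_pendant hl h hv)
      · exact Or.inr (core_pendant hl h hv)
    -- cardinality drop
    have hlp_ne : ℓ ≠ p := hl.2.2.1.ne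
    have hcard : s'.ncard < s.ncard := by
      apply Set.ncard_lt_ncard _ s.toFinite
      exact ⟨Set.diff_subset, fun hsub => hlns (hsub hl.1)⟩
    -- μ grows by one
    obtain ⟨E', hE', hE'card⟩ := muOn_mem G s'
    have hmatch : MatchOn G s (insert (s(ℓ, p)) E') := by
      constructor
      · intro e he
        rcases Finset.mem_insert.mp he with rfl | he
        · refine ⟨hl.2.2.1, ?_⟩
          intro v hv
          rcases Sym2.mem_iff.mp hv with rfl | rfl
          exacts [hl.1, hl.2.1]
        · exact ⟨(hE'.1 e he).1, fun v hv => ((hE'.1 e he).2 v hv).1⟩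
      · intro e he f hf hef v hve hvf
        have hmem : ∀ g ∈ E', ∀ u, u ∈ g → u ∈ s' := fun g hg u hu => (hE'.1 g hg).2 u hu
        rcases Finset.mem_insert.mp he with rfl | he
        · rcases Finset.mem_insert.mp hf with rfl | hf
          · exact hef rfl
          · have := hmem f hf v hvf
            rcases Sym2.mem_iff.mp hve with rfl | rfl
            exacts [hlns this, hpns this]
        · rcases Finset.mem_insert.mp hf with rfl | hf
          · have := hmem e he v hve
            rcases Sym2.mem_iff.mp hvf with rfl | rfl
            exacts [hlns this, hpns this]
          · exact hE'.2 e he f hf hef v hve hvf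
    have hnotmem : s(ℓ, p) ∉ E' := by
      intro h
      exact hlns ((hE'.1 _ h).2 ℓ (by simp))
    have hmu : muOn G s' + 1 ≤ muOn G s := by
      have := le_muOn hmatch
      rwa [Finset.card_insert_of_notMem hnotmem, hE'card] at this
    -- core count
    have hcore_card : (coreOn G s).ncard ≤ (coreOn G s').ncard + 1 := by
      have h1 : (coreOn G s \ {p}).ncard + 1 = (coreOn G s).ncard :=
        Set.ncard_diff_singleton_add_one hpcore (coreOn G s).toFinite
      have h2 : (coreOn G s \ {p}).ncard ≤ (coreOn G s').ncard :=
        Set.ncard_le_ncard hcore_sub (coreOn G s').toFinite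
      omega
    have := ih s'.ncard hcard s' hScov' rfl
    omega
  · -- no edges in s: core is empty
    have : coreOn G s = ∅ := by
      ext v
      simp only [Set.mem_empty_iff_false, iff_false]
      rintro ⟨hvs, u, hu, hadj⟩
      exact hedge ⟨u, hu.1, v, hvs, hadj⟩
    simp [this]

/-! ### the counting argument at `s = univ` -/

section Univ

variable {G : SimpleGraph V} (hG : G.IsAcyclic)
  (hcov : ∀ v : V, v ∈ suppOn G Set.univ ∪ coreOn G Set.univ)

/-- every edge has an endpoint in the core. -/
lemma edge_meets_core (hG : G.IsAcyclic)
    (hcov : ∀ v : V, v ∈ suppOn G Set.univ ∪ coreOn G Set.univ)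
    {u v : V} (huv : G.Adj u v) : u ∈ coreOn G Set.univ ∨ v ∈ coreOn G Set.univ := by
  by_contra h
  push_neg at h
  have hu : u ∈ suppOn G Set.univ := (hcov u).resolve_right h.1
  have hv : v ∈ suppOn G Set.univ := (hcov v).resolve_right h.2
  exact suppOn_indep hG hu hv huv

lemma exists_corePick {E : Finset (Sym2 V)} (hE : MatchOn G Set.univ E)
    (hG : G.IsAcyclic) (hcov : ∀ v : V, v ∈ suppOn G Set.univ ∪ coreOn G Set.univ)
    {e : Sym2 V} (he : e ∈ E) : ∃ v, v ∈ e ∧ v ∈ coreOn G Set.univ := by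
  induction e using Sym2.inductionOn with
  | _ u v =>
    have hadj : G.Adj u v := by
      have := (hE.1 _ he).1
      rwa [SimpleGraph.mem_edgeSet] at this
    rcases edge_meets_core hG hcov hadj with h | h
    · exact ⟨u, by simp, h⟩
    · exact ⟨v, by simp, h⟩

variable (G) in
/-- choice of a core endpoint of an edge (junk value if none). -/
private noncomputable def corePick (e : Sym2 V) : V :=
  if h : ∃ v, v ∈ e ∧ v ∈ coreOn G Set.univ then h.choose else (Quot.out e).1

lemma corePick_spec {e : Sym2 V} (h : ∃ v, v ∈ e ∧ v ∈ coreOn G Set.univ) :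
    corePick G e ∈ e ∧ corePick G e ∈ coreOn G Set.univ := by
  rw [corePick, dif_pos h]
  exact h.choose_spec

lemma corePick_injOn {E : Finset (Sym2 V)} (hE : MatchOn G Set.univ E)
    (hG : G.IsAcyclic) (hcov : ∀ v : V, v ∈ suppOn G Set.univ ∪ coreOn G Set.univ) :
    Set.InjOn (corePick G) E := by
  intro e he e' he' heq
  by_contra hne
  have h1 := corePick_spec (exists_corePick hE hG hcov he)
  have h2 := corePick_spec (exists_corePick hE hG hcov he')
  exact hE.2 e he e' he' hne _ h1.1 (heq ▸ h2.1)

/-- a matching has at most `|core|` edges. -/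
lemma matchOn_card_le_core {E : Finset (Sym2 V)} (hE : MatchOn G Set.univ E)
    (hG : G.IsAcyclic) (hcov : ∀ v : V, v ∈ suppOn G Set.univ ∪ coreOn G Set.univ) :
    E.card ≤ (coreOn G Set.univ).ncard := by
  classical
  rw [← Set.ncard_coe_finset E]
  rw [← Set.ncard_image_of_injOn (corePick_injOn hE hG hcov)]
  apply Set.ncard_le_ncard _ (coreOn G Set.univ).toFinite
  rintro v ⟨e, he, rfl⟩
  exact (corePick_spec (exists_corePick hE hG hcov he)).2

lemma muOn_univ_eq_core (hG : G.IsAcyclic)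
    (hcov : ∀ v : V, v ∈ suppOn G Set.univ ∪ coreOn G Set.univ) :
    muOn G Set.univ = (coreOn G Set.univ).ncard := by
  obtain ⟨E, hE, hcard⟩ := muOn_mem G Set.univ
  apply le_antisymm
  · rw [← hcard]; exact matchOn_card_le_core hE hG hcov
  · exact core_le_muOn hG Set.univ (fun v _ => hcov v)

/-- every maximum matching covers the core bijectively: a core vertex in an edge is the pick. -/
lemma max_core_eq_pick {E : Finset (Sym2 V)} (hE : MatchOn G Set.univ E)
    (hmax : E.card = muOn G Set.univ)
    (hG : G.IsAcyclic) (hcov : ∀ v : V, v ∈ suppOn G Set.univ ∪ coreOn G Set.univ)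
    {e : Sym2 V} (he : e ∈ E) {w : V} (hw : w ∈ e) (hwA : w ∈ coreOn G Set.univ) :
    w = corePick G e := by
  classical
  -- the image of corePick on E is all of the core
  have himsub : (corePick G) '' (E : Set (Sym2 V)) ⊆ coreOn G Set.univ := by
    rintro v ⟨f, hf, rfl⟩
    exact (corePick_spec (exists_corePick hE hG hcov hf)).2
  have hcards : ((corePick G) '' (E : Set (Sym2 V))).ncard = (coreOn G Set.univ).ncard := by
    rw [Set.ncard_image_of_injOn (corePick_injOn hE hG hcov), Set.ncard_coe_finset, hmax,
      muOn_univ_eq_core hG hcov]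
  have him : (corePick G) '' (E : Set (Sym2 V)) = coreOn G Set.univ :=
    Set.eq_of_subset_of_ncard_le himsub (by rw [hcards]) (coreOn G Set.univ).toFinite
  -- w is in the image
  obtain ⟨f, hf, hfw⟩ := him.symm ▸ hwA
  have hff : corePick G f ∈ f := (corePick_spec (exists_corePick hE hG hcov hf)).1
  by_cases hef : f = e
  · rw [← hfw, hef]
  · exact absurd hw (hE.2 f hf e he hef w (hfw ▸ hff))

/-- P1 : every edge of a maximum matching has exactly one core endpoint. -/
lemma maxmatch_one_core {E : Finset (Sym2 V)} (hE : MatchOn G Set.univ E)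
    (hmax : E.card = muOn G Set.univ)
    (hG : G.IsAcyclic) (hcov : ∀ v : V, v ∈ suppOn G Set.univ ∪ coreOn G Set.univ)
    {u v : V} (he : s(u, v) ∈ E) (hu : u ∈ coreOn G Set.univ) : v ∉ coreOn G Set.univ := by
  intro hv
  have hadj : G.Adj u v := by
    have := (hE.1 _ he).1
    rwa [SimpleGraph.mem_edgeSet] at this
  have h1 := max_core_eq_pick hE hmax hG hcov he (by simp) hu
  have h2 := max_core_eq_pick hE hmax hG hcov he (by simp) hv
  exact hadj.ne (h1.trans h2.symm)

end Univ

/-! ### decomposition over connected components -/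

def maxMatchOnSet (K : SimpleGraph V) (t : Set V) : Set (Finset (Sym2 V)) :=
  {E | MatchOn K t E ∧ E.card = muOn K t}

def numMaxOn (K : SimpleGraph V) (t : Set V) : ℕ := (maxMatchOnSet K t).ncard

section Decomp

variable {S H : SimpleGraph V}

/-- membership of an edge's vertices in a component's support. -/
private def inComp (H : SimpleGraph V) (c : H.ConnectedComponent) (e : Sym2 V) : Prop :=
  ∀ v ∈ e, v ∈ c.supp

lemma edge_in_unique_comp {c c' : H.ConnectedComponent} {e : Sym2 V}
    (h : inComp H c e) (h' : inComp H c' e) : c = c' := by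
  induction e using Sym2.inductionOn with
  | _ u v =>
    have h1 := h u (by simp)
    have h2 := h' u (by simp)
    rw [SimpleGraph.ConnectedComponent.mem_supp_iff] at h1 h2
    rw [← h1, ← h2]

lemma edge_in_some_comp {e : Sym2 V} (he : e ∈ H.edgeSet) :
    inComp H (H.connectedComponentMk e.out.1) e := by
  induction e using Sym2.inductionOn with
  | _ u v =>
    intro w hw
    rw [SimpleGraph.mem_edgeSet] at he
    rw [SimpleGraph.ConnectedComponent.mem_supp_iff]
    have houtadj : s(u, v).out.1 = u ∨ s(u, v).out.1 = v := by
      have : s(u, v).out.1 ∈ s(u, v) := Sym2.out_fst_mem _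
      exact Sym2.mem_iff.mp this
    have hcomp : H.connectedComponentMk u = H.connectedComponentMk v :=
      SimpleGraph.ConnectedComponent.sound he.reachable
    rcases Sym2.mem_iff.mp hw with rfl | rfl <;> rcases houtadj with h | h <;> rw [h] <;>
      simp [hcomp]

/-- the part of a matching inside a component. -/
private noncomputable def part (H : SimpleGraph V) (E : Finset (Sym2 V))
    (c : H.ConnectedComponent) : Finset (Sym2 V) :=
  E.filter (inComp H c)

lemma part_subset {E : Finset (Sym2 V)} {c : H.ConnectedComponent} : part H E c ⊆ E :=
  Finset.filter_subset _ _

lemma mem_part {E : Finset (Sym2 V)} {c : H.ConnectedComponent} {e : Sym2 V} :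
    e ∈ part H E c ↔ e ∈ E ∧ inComp H c e := Finset.mem_filter

/-- a matching of `H` on `univ` splits as the disjoint union of its parts. -/
lemma sum_part_card {E : Finset (Sym2 V)} (hE : ∀ e ∈ E, e ∈ H.edgeSet) :
    ∑ c : H.ConnectedComponent, (part H E c).card = E.card := by
  classical
  rw [← Finset.card_biUnion]
  · congr 1
    ext e
    simp only [Finset.mem_biUnion, Finset.mem_univ, true_and, mem_part]
    constructor
    · rintro ⟨c, he, -⟩; exact he
    · intro he
      exact ⟨_, he, edge_in_some_comp (hE e he)⟩
  · intro c _ c' _ hcc'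
    rw [Function.onFun, Finset.disjoint_left]
    intro e he1 he2
    rw [mem_part] at he1 he2
    exact hcc' (edge_in_unique_comp he1.2 he2.2)

lemma part_matchOn {E : Finset (Sym2 V)} (hE : MatchOn S Set.univ E)
    (hEH : ∀ e ∈ E, e ∈ H.edgeSet) (c : H.ConnectedComponent) :
    MatchOn H c.supp (part H E c) := by
  constructor
  · intro e he
    rw [mem_part] at he
    exact ⟨hEH e he.1, he.2⟩
  · intro e he f hf hef v hve hvf
    exact hE.2 e (part_subset he) f (part_subset hf) hef v hve hvf

lemma biUnion_matchOn (hHS : H ≤ S) (F : ∀ c : H.ConnectedComponent, Finset (Sym2 V))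
    (hF : ∀ c, MatchOn H c.supp (F c)) :
    MatchOn S Set.univ (Finset.univ.biUnion F) := by
  constructor
  · intro e he
    obtain ⟨c, -, hec⟩ := Finset.mem_biUnion.mp he
    exact ⟨SimpleGraph.edgeSet_mono hHS ((hF c).1 e hec).1, fun v _ => trivial⟩
  · intro e he f hf hef v hve hvf
    obtain ⟨c, -, hec⟩ := Finset.mem_biUnion.mp he
    obtain ⟨c', -, hfc⟩ := Finset.mem_biUnion.mp hf
    by_cases hcc : c = c'
    · subst hcc
      exact (hF c).2 e hec f hfc hef v hve hvf
    · apply hcc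
      have h1 := ((hF c).1 e hec).2 v hve
      have h2 := ((hF c').1 f hfc).2 v hvf
      rw [SimpleGraph.ConnectedComponent.mem_supp_iff] at h1 h2
      rw [← h1, ← h2]

lemma biUnion_card (F : ∀ c : H.ConnectedComponent, Finset (Sym2 V))
    (hF : ∀ c, MatchOn H c.supp (F c)) :
    (Finset.univ.biUnion F).card = ∑ c : H.ConnectedComponent, (F c).card := by
  rw [Finset.card_biUnion]
  intro c _ c' _ hcc'
  rw [Function.onFun, Finset.disjoint_left]
  intro e he1 he2
  apply hcc'
  have hv : e.out.1 ∈ e := Sym2.out_fst_mem _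
  have h1 := ((hF c).1 e he1).2 _ hv
  have h2 := ((hF c').1 e he2).2 _ hv
  rw [SimpleGraph.ConnectedComponent.mem_supp_iff] at h1 h2
  rw [← h1, ← h2]

variable (S H) in
/-- hypothesis: every maximum matching of `S` uses only `H`-edges. -/
def MaxUsesH : Prop :=
  ∀ E : Finset (Sym2 V), MatchOn S Set.univ E → E.card = muOn S Set.univ →
    ∀ e ∈ E, e ∈ H.edgeSet

lemma muOn_sum (hHS : H ≤ S) (hmaxH : MaxUsesH S H) :
    muOn S Set.univ = ∑ c : H.ConnectedComponent, muOn H c.supp := by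
  apply le_antisymm
  · obtain ⟨E, hE, hcard⟩ := muOn_mem S Set.univ
    rw [← hcard]
    have hEH := hmaxH E hE hcard
    rw [← sum_part_card hEH]
    apply Finset.sum_le_sum
    intro c _
    exact le_muOn (part_matchOn hE hEH c)
  · choose F hF hFcard using fun c : H.ConnectedComponent => muOn_mem H c.supp
    have := le_muOn (biUnion_matchOn hHS F hF)
    rw [biUnion_card F hF] at this
    have h2 : ∑ c : H.ConnectedComponent, muOn H c.supp
        = ∑ c : H.ConnectedComponent, (F c).card :=
      Finset.sum_congr rfl (fun c _ => (hFcard c).symm)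
    rw [h2]
    exact this

lemma part_card_eq {E : Finset (Sym2 V)} (hHS : H ≤ S) (hmaxH : MaxUsesH S H)
    (hE : MatchOn S Set.univ E) (hcard : E.card = muOn S Set.univ) (c : H.ConnectedComponent) :
    (part H E c).card = muOn H c.supp := by
  have hEH := hmaxH E hE hcard
  have hle : ∀ c' : H.ConnectedComponent, c' ∈ Finset.univ →
      (part H E c').card ≤ muOn H c'.supp :=
    fun c' _ => le_muOn (part_matchOn hE hEH c')
  have hsum : ∑ c' : H.ConnectedComponent, (part H E c').card
      = ∑ c' : H.ConnectedComponent, muOn H c'.supp := by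
    rw [sum_part_card hEH, hcard, muOn_sum hHS hmaxH]
  exact ((Finset.sum_eq_sum_iff_of_le hle).mp hsum) c (Finset.mem_univ c)

/-- the decomposition bijection. -/
noncomputable def decompEquiv (hHS : H ≤ S) (hmaxH : MaxUsesH S H) :
    (maxMatchOnSet S Set.univ) ≃ Π c : H.ConnectedComponent, (maxMatchOnSet H c.supp) where
  toFun E := fun c => ⟨part H E.1 c,
    part_matchOn E.2.1 (hmaxH E.1 E.2.1 E.2.2) c, part_card_eq hHS hmaxH E.2.1 E.2.2 c⟩
  invFun F := ⟨Finset.univ.biUnion (fun c => (F c).1),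
    biUnion_matchOn hHS _ (fun c => (F c).2.1), by
      rw [biUnion_card _ (fun c => (F c).2.1), muOn_sum hHS hmaxH]
      apply Finset.sum_congr rfl
      intro c _
      exact (F c).2.2⟩
  left_inv := by
    rintro ⟨E, hE, hcard⟩
    apply Subtype.ext
    simp only
    ext e
    simp only [Finset.mem_biUnion, Finset.mem_univ, true_and, mem_part]
    constructor
    · rintro ⟨c, he, -⟩; exact he
    · intro he
      exact ⟨_, he, edge_in_some_comp (hmaxH E hE hcard e he)⟩
  right_inv := by
    intro F
    funext c
    apply Subtype.ext
    simp only
    ext e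
    simp only [mem_part, Finset.mem_biUnion, Finset.mem_univ, true_and]
    constructor
    · rintro ⟨⟨c', hec'⟩, hc⟩
      have hc' : inComp H c' e := fun v hv => ((F c').2.1.1 e hec').2 v hv
      rwa [edge_in_unique_comp hc hc']
    · intro he
      exact ⟨⟨c, he⟩, fun v hv => ((F c).2.1.1 e he).2 v hv⟩

lemma numMaxOn_prod (hHS : H ≤ S) (hmaxH : MaxUsesH S H) :
    numMaxOn S Set.univ = ∏ c : H.ConnectedComponent, numMaxOn H c.supp := by
  unfold numMaxOn
  have hn : ∀ (t : Set (Finset (Sym2 V))), t.ncard = Nat.card t :=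
    fun t => (Nat.card_coe_set_eq t).symm
  rw [hn, Nat.card_congr (decompEquiv hHS hmaxH), Nat.card_pi]
  exact Finset.prod_congr rfl (fun c _ => Nat.card_coe_set_eq _)

end Decomp

/-! ### transfer between Subgraph matchings and finset matchings -/

section Transfer

variable {U : Type*} [Fintype U] {W : SimpleGraph U}

lemma sym2_decomp {v : U} {e : Sym2 U} (hv : v ∈ e) : ∃ w, e = s(v, w) := by
  induction e using Sym2.inductionOn with
  | _ a b =>
    rcases Sym2.mem_iff.mp hv with rfl | rfl
    · exact ⟨b, rfl⟩
    · exact ⟨a, Sym2.eq_swap.symm⟩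

lemma subgraph_mem_edge {M : W.Subgraph} {e : Sym2 U} {v : U} (he : e ∈ M.edgeSet)
    (hv : v ∈ e) : ∃ w, M.Adj v w ∧ e = s(v, w) := by
  obtain ⟨w, rfl⟩ := sym2_decomp hv
  exact ⟨w, he, rfl⟩

lemma matchOn_toFinset {M : W.Subgraph} (h : M.IsMatching) :
    MatchOn W Set.univ (M.edgeSet.toFinite.toFinset) := by
  constructor
  · intro e he
    rw [Set.Finite.mem_toFinset] at he
    exact ⟨M.edgeSet_subset he, fun v _ => trivial⟩
  · intro e he f hf hef v hve hvf
    rw [Set.Finite.mem_toFinset] at he hf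
    obtain ⟨w, hw, rfl⟩ := subgraph_mem_edge he hve
    obtain ⟨w', hw', rfl⟩ := subgraph_mem_edge hf hvf
    obtain ⟨z, -, hz⟩ := h (M.edge_vert hw)
    rw [hz w hw, hz w' hw'] at hef
    exact hef rfl

/-- build a subgraph matching from a finset matching. -/
def toSubgraph (E : Finset (Sym2 U)) (hE : MatchOn W Set.univ E) : W.Subgraph where
  verts := {v | ∃ e ∈ E, v ∈ e}
  Adj a b := s(a, b) ∈ E
  adj_sub := fun h => by
    have := (hE.1 _ h).1
    rwa [SimpleGraph.mem_edgeSet] at this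
  edge_vert := fun h => ⟨_, h, by simp⟩
  symm := ⟨fun a b h => by show s(b, a) ∈ E; rwa [Sym2.eq_swap]⟩

lemma toSubgraph_isMatching {E : Finset (Sym2 U)} (hE : MatchOn W Set.univ E) :
    (toSubgraph E hE).IsMatching := by
  rintro v ⟨e, he, hv⟩
  obtain ⟨w, rfl⟩ := sym2_decomp hv
  refine ⟨w, he, ?_⟩
  intro w' hw'
  have : s(v, w') = s(v, w) := by
    by_contra hne
    exact hE.2 _ hw' _ he hne v (by simp) (by simp)
  exact (Sym2.congr_right.mp this)

lemma toSubgraph_edgeSet {E : Finset (Sym2 U)} (hE : MatchOn W Set.univ E) :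
    (toSubgraph E hE).edgeSet = ↑E := by
  ext e
  induction e using Sym2.inductionOn with
  | _ a b => simp [toSubgraph, SimpleGraph.Subgraph.mem_edgeSet]

lemma matchingNumber_eq_muOn : matchingNumber W = muOn W Set.univ := by
  unfold matchingNumber muOn
  congr 1
  ext n
  constructor
  · rintro ⟨M, hM, rfl⟩
    refine ⟨M.edgeSet.toFinite.toFinset, matchOn_toFinset hM, ?_⟩
    rw [Set.ncard_eq_toFinset_card _ M.edgeSet.toFinite]
  · rintro ⟨E, hE, rfl⟩
    refine ⟨toSubgraph E hE, toSubgraph_isMatching hE, ?_⟩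
    rw [toSubgraph_edgeSet hE, Set.ncard_coe_finset]

lemma numMaxMatchings_eq_numMaxOn : numMaxMatchings W = numMaxOn W Set.univ := by
  unfold numMaxMatchings numMaxOn
  have hverts : ∀ (N : W.Subgraph), N.IsMatching → N.verts = {v | ∃ w, N.Adj v w} := by
    intro N hN
    ext v
    constructor
    · intro hv
      obtain ⟨w, hw, -⟩ := hN hv
      exact ⟨w, hw⟩
    · rintro ⟨w, hw⟩
      exact N.edge_vert hw
  have hinj : Set.InjOn (fun M : W.Subgraph => M.edgeSet.toFinite.toFinset)
      (maxMatchings W) := by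
    intro M hM M' hM' heq
    simp only at heq
    have hedge : M.edgeSet = M'.edgeSet := by
      rw [← Set.Finite.coe_toFinset M.edgeSet.toFinite, heq, Set.Finite.coe_toFinset]
    have hAdj : ∀ a b, M.Adj a b ↔ M'.Adj a b := by
      intro a b
      rw [← SimpleGraph.Subgraph.mem_edgeSet, ← SimpleGraph.Subgraph.mem_edgeSet, hedge]
    ext v w
    · rw [hverts M hM.1, hverts M' hM'.1]
      simp only [Set.mem_setOf_eq]
      exact exists_congr (fun w => hAdj v w)
    · exact hAdj v w
  rw [← Set.ncard_image_of_injOn hinj]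
  congr 1
  ext E
  constructor
  · rintro ⟨M, hM, rfl⟩
    refine ⟨matchOn_toFinset hM.1, ?_⟩
    rw [← Set.ncard_eq_toFinset_card _ M.edgeSet.toFinite, hM.2, matchingNumber_eq_muOn]
  · rintro ⟨hE, hcard⟩
    refine ⟨toSubgraph E hE, ⟨toSubgraph_isMatching hE, ?_⟩, ?_⟩
    · rw [toSubgraph_edgeSet hE, Set.ncard_coe_finset, hcard, matchingNumber_eq_muOn]
    · simp only
      apply Finset.coe_injective
      rw [Set.Finite.coe_toFinset, toSubgraph_edgeSet hE]

section Induce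

variable {K : SimpleGraph V} {t : Set V}

private noncomputable def emap (t : Set V) (E : Finset (Sym2 ↥t)) : Finset (Sym2 V) :=
  E.image (Sym2.map (Subtype.val))

lemma emap_inj : Function.Injective (Sym2.map (Subtype.val : ↥t → V)) :=
  Sym2.map.injective Subtype.val_injective

lemma matchOn_emap {E : Finset (Sym2 ↥t)} (hE : MatchOn (K.induce t) Set.univ E) :
    MatchOn K t (emap t E) := by
  constructor
  · intro e' he'
    obtain ⟨e, he, rfl⟩ := Finset.mem_image.mp he'
    induction e using Sym2.inductionOn with
    | _ a b =>
      have hadj : (K.induce t).Adj a b := by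
        have := (hE.1 _ he).1
        rwa [SimpleGraph.mem_edgeSet] at this
      rw [SimpleGraph.comap_adj] at hadj
      refine ⟨?_, ?_⟩
      · rw [Sym2.map_pair_eq, SimpleGraph.mem_edgeSet]
        exact hadj
      · intro v hv
        rw [Sym2.map_pair_eq] at hv
        rcases Sym2.mem_iff.mp hv with rfl | rfl
        · exact a.2
        · exact b.2
  · intro e' he' f' hf' hef v hve hvf
    obtain ⟨e, he, rfl⟩ := Finset.mem_image.mp he'
    obtain ⟨f, hf, rfl⟩ := Finset.mem_image.mp hf'
    obtain ⟨x, hx, hxv⟩ := Sym2.mem_map.mp hve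
    obtain ⟨y, hy, hyv⟩ := Sym2.mem_map.mp hvf
    have hxy : x = y := Subtype.val_injective (hxv.trans hyv.symm)
    subst hxy
    exact hE.2 e he f hf (fun h => hef (by rw [h])) x hx hy

lemma emap_surj {E' : Finset (Sym2 V)} (hE' : MatchOn K t E') :
    ∃ E : Finset (Sym2 ↥t), MatchOn (K.induce t) Set.univ E ∧ emap t E = E' := by
  classical
  refine ⟨Finset.univ.filter (fun e : Sym2 ↥t => Sym2.map Subtype.val e ∈ E'), ?_, ?_⟩
  · constructor
    · intro e he
      rw [Finset.mem_filter] at he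
      induction e using Sym2.inductionOn with
      | _ a b =>
        refine ⟨?_, fun v _ => trivial⟩
        rw [SimpleGraph.mem_edgeSet, SimpleGraph.comap_adj]
        have := (hE'.1 _ he.2).1
        rwa [Sym2.map_pair_eq, SimpleGraph.mem_edgeSet] at this
    · intro e he f hf hef x hxe hxf
      rw [Finset.mem_filter] at he hf
      have hne : Sym2.map (Subtype.val) e ≠ Sym2.map (Subtype.val) f :=
        fun h => hef (emap_inj h)
      exact hE'.2 _ he.2 _ hf.2 hne ↑x (Sym2.mem_map.mpr ⟨x, hxe, rfl⟩)
        (Sym2.mem_map.mpr ⟨x, hxf, rfl⟩)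
  · ext e'
    simp only [emap, Finset.mem_image, Finset.mem_filter, Finset.mem_univ, true_and]
    constructor
    · rintro ⟨e, he, rfl⟩
      exact he
    · intro he'
      induction e' using Sym2.inductionOn with
      | _ a b =>
        have ha : a ∈ t := (hE'.1 _ he').2 a (by simp)
        have hb : b ∈ t := (hE'.1 _ he').2 b (by simp)
        exact ⟨s(⟨a, ha⟩, ⟨b, hb⟩), by rwa [Sym2.map_pair_eq], by rw [Sym2.map_pair_eq]⟩

lemma muOn_induce : muOn (K.induce t) Set.univ = muOn K t := by
  unfold muOn
  congr 1
  ext n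
  constructor
  · rintro ⟨E, hE, rfl⟩
    exact ⟨emap t E, matchOn_emap hE, Finset.card_image_of_injective _ emap_inj⟩
  · rintro ⟨E', hE', rfl⟩
    obtain ⟨E, hE, hmap⟩ := emap_surj hE'
    exact ⟨E, hE, by rw [← hmap, emap, Finset.card_image_of_injective _ emap_inj]⟩

lemma numMaxOn_induce : numMaxOn (K.induce t) Set.univ = numMaxOn K t := by
  unfold numMaxOn
  have hinj : Set.InjOn (emap t) (maxMatchOnSet (K.induce t) Set.univ) := fun E _ F _ h =>
    Finset.image_injective emap_inj h
  rw [← Set.ncard_image_of_injOn hinj]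
  congr 1
  ext E'
  constructor
  · rintro ⟨E, ⟨hE, hcard⟩, rfl⟩
    refine ⟨matchOn_emap hE, ?_⟩
    rw [emap, Finset.card_image_of_injective _ emap_inj, hcard, muOn_induce]
  · rintro ⟨hE', hcard⟩
    obtain ⟨E, hE, hmap⟩ := emap_surj hE'
    refine ⟨E, ⟨hE, ?_⟩, hmap⟩
    rw [muOn_induce, ← hcard, ← hmap, emap, Finset.card_image_of_injective _ emap_inj]

lemma numMaxMatchings_induce : numMaxMatchings (K.induce t) = numMaxOn K t := by
  rw [numMaxMatchings_eq_numMaxOn, numMaxOn_induce]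

end Induce

end Transfer

/-! ### bridge to the original definitions -/

section Bridge

variable {G : SimpleGraph V}

lemma mulVec_eq_rowSum (x : V → ℝ) (w : V) :
    (adjMat G *ᵥ x) w = rowSum G Set.univ x w := by
  unfold rowSum nbrs adjMat
  rw [Matrix.mulVec, dotProduct, Finset.sum_filter]
  apply Finset.sum_congr rfl
  intro z _
  by_cases h : G.Adj w z <;> simp [h]

lemma kerOn_iff (x : V → ℝ) : kerOn G Set.univ x ↔ adjMat G *ᵥ x = 0 := by
  constructor
  · intro hx
    funext w
    rw [mulVec_eq_rowSum, hx.2 w trivial]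
    rfl
  · intro hx
    refine ⟨fun v hv => absurd trivial hv, fun w _ => ?_⟩
    rw [← mulVec_eq_rowSum, hx]
    rfl

lemma suppSet_eq : suppSet G = suppOn G Set.univ := by
  ext v
  unfold suppSet suppOn
  simp only [Set.mem_setOf_eq, Set.mem_univ, true_and]
  constructor
  · rintro ⟨x, hx, hxv⟩
    exact ⟨x, (kerOn_iff x).mpr hx, hxv⟩
  · rintro ⟨x, hx, hxv⟩
    exact ⟨x, (kerOn_iff x).mp hx, hxv⟩

lemma coreSet_eq : coreSet G = coreOn G Set.univ := by
  ext v
  unfold coreSet coreOn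
  simp only [Set.mem_setOf_eq, Set.mem_univ, true_and, suppSet_eq]

end Bridge

/-! ### main theorem -/

theorem main (S : SimpleGraph V) (hS : IsSTree S) :
    let H : SimpleGraph V :=
      SimpleGraph.fromRel (fun a b => S.Adj a b ∧ (a ∉ coreSet S ∨ b ∉ coreSet S))
    numMaxMatchings S = ∏ᶠ c : H.ConnectedComponent, numMaxMatchings (H.induce c.supp) := by
  intro H
  have hG : S.IsAcyclic := hS.1.2
  have hcov : ∀ v : V, v ∈ suppOn S Set.univ ∪ coreOn S Set.univ := by
    intro v
    have := hS.2
    rw [suppSet_eq, coreSet_eq] at this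
    rw [this]
    trivial
  have hHS : H ≤ S := by
    intro a b hab
    rw [SimpleGraph.fromRel_adj] at hab
    rcases hab.2 with h | h
    · exact h.1
    · exact h.1.symm
  have hmaxH : MaxUsesH S H := by
    intro E hE hcard e he
    induction e using Sym2.inductionOn with
    | _ u v =>
      have hadj : S.Adj u v := by
        have := (hE.1 _ he).1
        rwa [SimpleGraph.mem_edgeSet] at this
      rw [SimpleGraph.mem_edgeSet, SimpleGraph.fromRel_adj]
      refine ⟨hadj.ne, Or.inl ⟨hadj, ?_⟩⟩
      rw [coreSet_eq]
      by_cases hu : u ∈ coreOn S Set.univ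
      · exact Or.inr (maxmatch_one_core hE hcard hG hcov he hu)
      · exact Or.inl hu
  calc numMaxMatchings S = numMaxOn S Set.univ := numMaxMatchings_eq_numMaxOn
    _ = ∏ c : H.ConnectedComponent, numMaxOn H c.supp := by convert numMaxOn_prod hHS hmaxH using 3
    _ = ∏ c : H.ConnectedComponent, numMaxMatchings (H.induce c.supp) :=
        Finset.prod_congr rfl (fun c _ => (numMaxMatchings_induce).symm)
    _ = ∏ᶠ c : H.ConnectedComponent, numMaxMatchings (H.induce c.supp) :=
        (finprod_eq_prod_of_fintype _).symm

end STree17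


/-- For an S-tree `S`, the number of maximum matchings of `S` is the product, over the
connected components (S-atoms) of the graph obtained by deleting all core-core edges, of the
numbers of maximum matchings of the components. -/
theorem stmt17 [Fintype V] (S : SimpleGraph V) (hS : IsSTree S) :
    let H : SimpleGraph V :=
      SimpleGraph.fromRel (fun a b => S.Adj a b ∧ (a ∉ coreSet S ∨ b ∉ coreSet S))
    numMaxMatchings S = ∏ᶠ c : H.ConnectedComponent, numMaxMatchings (H.induce c.supp) := by
  exact STree17.main S hS
end
end

section
/- Let A be an S-atom. The set B = {e_v : v ∈ Core(A)} ∪ {e_{R(v)} : v ∈ Core(A)}, where R(v) = {u ∈ Supp(A) : u ∼ v} is the v-bouquet and e_U = Σ_{u∈U} e_u, is a basis of the column space of the adjacency matrix A(A). -/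
open scoped Classical

open SimpleGraph Matrix

noncomputable section

variable {V : Type*}

/-- For an S-atom `A`, the vectors `e_v` for `v ∈ Core(A)` together with the bouquet sums
`e_{R(v)}` (where `R(v) = {u ∈ Supp(A) : u ∼ v}`) form a basis of the column space of the
adjacency matrix of `A`. -/
theorem stmt18 [Fintype V] (S : SimpleGraph V) (hS : IsSTree S)
    (hatom : ∀ a b, S.Adj a b → ¬(a ∈ coreSet S ∧ b ∈ coreSet S)) :
    let b : ↥(coreSet S) ⊕ ↥(coreSet S) → (V → ℝ) :=
      Sum.elim (fun u w => if w = u.val then (1 : ℝ) else 0)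
        (fun u w => if w ∈ suppSet S ∧ S.Adj w u.val then (1 : ℝ) else 0)
    LinearIndependent ℝ b ∧
      Submodule.span ℝ (Set.range b) = LinearMap.range (adjMat S).mulVecLin := by
  intro b
  -- basic structure lemmas
  have hcover : ∀ v : V, v ∈ suppSet S ∨ v ∈ coreSet S := by
    intro v
    have h : v ∈ suppSet S ∪ coreSet S := hS.2 ▸ Set.mem_univ v
    exact h
  have hdisj : ∀ v, v ∈ coreSet S → v ∉ suppSet S := by
    intro v hc hs
    obtain ⟨u, hu, hadj⟩ := hc
    exact hatom u v hadj ⟨⟨v, hs, hadj.symm⟩, ⟨u, hu, hadj⟩⟩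
  have hAdjCoreSupp : ∀ a c, S.Adj a c → c ∈ coreSet S → a ∈ suppSet S := by
    intro a c h hc
    rcases hcover a with ha | ha
    · exact ha
    · exact absurd ⟨ha, hc⟩ (hatom a c h)
  -- kernel vectors vanish on the core
  have hker : ∀ (x : V → ℝ), adjMat S *ᵥ x = 0 → ∀ v, v ∈ coreSet S → x v = 0 := by
    intro x hx v hv
    by_contra h
    exact hdisj v hv ⟨x, hx, h⟩
  -- the column of a core vertex is the bouquet vector
  have hcol : ∀ (v : ↥(coreSet S)),
      (adjMat S) *ᵥ Pi.single (v : V) 1 = b (Sum.inr v) := by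
    intro v
    rw [Matrix.mulVec_single]
    funext w
    show adjMat S w v * 1 = if w ∈ suppSet S ∧ S.Adj w v.val then (1:ℝ) else 0
    by_cases h : S.Adj w v.val
    · have hw : w ∈ suppSet S := hAdjCoreSupp w v.val h v.2
      simp [adjMat, h, hw]
    · simp [adjMat, h]
  -- sums of indicators over the core
  have hsum : ∀ (c : ↥(coreSet S) → ℝ) (u : ↥(coreSet S)),
      ∑ a : ↥(coreSet S), c a * (if (u : V) = a.val then (1:ℝ) else 0) = c u := by
    intro c u
    rw [Finset.sum_congr rfl (g := fun a => if a = u then c a else 0) ?_,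
      Finset.sum_ite_eq' Finset.univ u c]
    · simp
    · intro a _
      by_cases h : a = u
      · simp [h]
      · have : (u : V) ≠ a.val := fun hh => h (Subtype.ext hh.symm)
        simp [h, this]
  have hbl : ∀ u : ↥(coreSet S), b (Sum.inl u) = Pi.single (u : V) 1 := by
    intro u
    funext w
    show (if w = u.val then (1:ℝ) else 0) = _
    simp [Pi.single_apply]
  constructor
  · -- linear independence
    rw [Fintype.linearIndependent_iff]
    intro g hg
    have hg' : ∀ w : V, (∑ a : ↥(coreSet S), g (Sum.inl a) * b (Sum.inl a) w)
        + (∑ a : ↥(coreSet S), g (Sum.inr a) * b (Sum.inr a) w) = 0 := by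
      intro w
      have h0 := congrFun hg w
      simpa [Fintype.sum_sum_type, Finset.sum_apply] using h0
    -- first: inl coefficients vanish
    have hinl : ∀ u : ↥(coreSet S), g (Sum.inl u) = 0 := by
      intro u
      have h0 := hg' u.val
      have h1 : (∑ a : ↥(coreSet S), g (Sum.inr a) * b (Sum.inr a) u.val) = 0 := by
        apply Finset.sum_eq_zero
        intro a _
        have : ¬((u : V) ∈ suppSet S ∧ S.Adj u.val a.val) := fun hc => hdisj u.val u.2 hc.1
        show g (Sum.inr a) * (if (u:V) ∈ suppSet S ∧ S.Adj u.val a.val then (1:ℝ) else 0) = 0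
        simp [this]
      have h2 : (∑ a : ↥(coreSet S), g (Sum.inl a) * b (Sum.inl a) u.val) = g (Sum.inl u) :=
        hsum (fun a => g (Sum.inl a)) u
      rw [h1, h2, add_zero] at h0
      exact h0
    refine fun i => ?_
    cases i with
    | inl u => exact hinl u
    | inr u =>
      -- build the putative kernel vector
      set x : V → ℝ := ∑ a : ↥(coreSet S), g (Sum.inr a) • (Pi.single (a : V) (1:ℝ) : V → ℝ) with hxdef
      have hx : adjMat S *ᵥ x = 0 := by
        have h1 : adjMat S *ᵥ x
            = ∑ a : ↥(coreSet S), g (Sum.inr a) • (adjMat S *ᵥ Pi.single (a : V) 1) := by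
          rw [← Matrix.mulVecLin_apply, hxdef, map_sum]
          simp only [_root_.map_smul, Matrix.mulVecLin_apply]
        rw [h1]
        funext w
        rw [Finset.sum_apply]
        simp only [Pi.zero_apply]
        have : ∀ a : ↥(coreSet S),
            (g (Sum.inr a) • (adjMat S *ᵥ Pi.single (a : V) 1)) w
              = g (Sum.inr a) * b (Sum.inr a) w := by
          intro a
          rw [Pi.smul_apply, hcol a, smul_eq_mul]
        rw [Finset.sum_congr rfl fun a _ => this a]
        have h0 := hg' w
        have h2 : (∑ a : ↥(coreSet S), g (Sum.inl a) * b (Sum.inl a) w) = 0 :=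
          Finset.sum_eq_zero fun a _ => by rw [hinl a, zero_mul]
        rw [h2, zero_add] at h0
        exact h0
      have hxv : x u.val = g (Sum.inr u) := by
        rw [hxdef, Finset.sum_apply]
        have : ∀ a : ↥(coreSet S),
            (g (Sum.inr a) • (Pi.single (a : V) (1:ℝ) : V → ℝ)) u.val
              = g (Sum.inr a) * (if (u : V) = a.val then (1:ℝ) else 0) := by
          intro a
          simp [Pi.single_apply]
        rw [Finset.sum_congr rfl fun a _ => this a, hsum]
      have := hker x hx u.val u.2
      rw [hxv] at this
      exact this
  · -- span equals range
    apply le_antisymm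
    · rw [Submodule.span_le]
      rintro y ⟨i, rfl⟩
      cases i with
      | inr u =>
        exact ⟨Pi.single (u : V) 1, by rw [Matrix.mulVecLin_apply, hcol u]⟩
      | inl u =>
        rw [SetLike.mem_coe, hbl u,
          ← Subspace.forall_mem_dualAnnihilator_apply_eq_zero_iff]
        intro φ hφ
        rw [Submodule.mem_dualAnnihilator] at hφ
        set y : V → ℝ := fun w => φ (Pi.single w 1) with hy
        have hAy : adjMat S *ᵥ y = 0 := by
          funext a
          have h3 : (fun i => adjMat S i a * 1) = ∑ w : V, adjMat S a w • (Pi.single w (1:ℝ) : V → ℝ) := by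
            funext i
            rw [Finset.sum_apply]
            have : ∀ w : V, (adjMat S a w • (Pi.single w (1:ℝ) : V → ℝ)) i
                = if i = w then adjMat S a w else 0 := by
              intro w
              by_cases h : i = w <;> simp [Pi.single_apply, h]
            rw [Finset.sum_congr rfl fun w _ => this w, Finset.sum_ite_eq Finset.univ i]
            simp [adjMat, S.adj_comm]
          have h4 : (adjMat S *ᵥ y) a = φ (adjMat S *ᵥ Pi.single a 1) := by
            rw [Matrix.mulVec_single]
            change (adjMat S *ᵥ y) a = φ (fun i => adjMat S i a * 1)
            rw [h3, map_sum]
            simp only [_root_.map_smul]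
            show ∑ w, adjMat S a w * y w = ∑ w, adjMat S a w • φ (Pi.single w 1)
            rfl
          rw [h4]
          have : adjMat S *ᵥ Pi.single a 1 ∈ LinearMap.range (adjMat S).mulVecLin :=
            ⟨Pi.single a 1, rfl⟩
          simpa using hφ _ this
        exact hker y hAy u.val u.2
    · rintro y ⟨x, rfl⟩
      rw [Matrix.mulVecLin_apply]
      have hxdec : x = ∑ w : V, x w • (Pi.single w (1:ℝ) : V → ℝ) := by
        funext i
        rw [Finset.sum_apply]
        have : ∀ w : V, (x w • (Pi.single w (1:ℝ) : V → ℝ)) i = if i = w then x w else 0 := by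
          intro w
          by_cases h : i = w <;> simp [Pi.single_apply, h]
        rw [Finset.sum_congr rfl fun w _ => this w, Finset.sum_ite_eq Finset.univ i]
        simp
      rw [hxdec, ← Matrix.mulVecLin_apply, map_sum]
      apply Submodule.sum_mem
      intro w _
      rw [_root_.map_smul]
      apply Submodule.smul_mem
      rw [Matrix.mulVecLin_apply]
      rcases hcover w with hw | hw
      · -- w in support: column is a combination of the e_v, v in core
        have hcolw : adjMat S *ᵥ Pi.single w 1
            = ∑ v : ↥(coreSet S), adjMat S w v.val • b (Sum.inl v) := by
          funext a
          rw [Matrix.mulVec_single, Finset.sum_apply]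
          beta_reduce
          have : ∀ v : ↥(coreSet S), (adjMat S w v.val • b (Sum.inl v)) a
              = (if a = v.val then adjMat S w v.val else 0) := by
            intro v
            show adjMat S w v.val * (if a = v.val then (1:ℝ) else 0) = _
            by_cases h : a = v.val <;> simp [h]
          rw [Finset.sum_congr rfl fun v _ => this v]
          by_cases ha : S.Adj a w
          · have hac : a ∈ coreSet S := ⟨w, hw, ha.symm⟩
            rw [Finset.sum_eq_single (⟨a, hac⟩ : ↥(coreSet S))]
            · simp [adjMat, ha, ha.symm]
            · intro v _ hv
              have : a ≠ v.val := fun hh => hv (Subtype.ext hh.symm)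
              simp [this]
            · intro h; exact absurd (Finset.mem_univ _) h
          · have hl : adjMat S a w * 1 = 0 := by simp [adjMat, ha]
            change adjMat S a w * 1 = _
            rw [hl]
            refine (Finset.sum_eq_zero ?_).symm
            intro v _
            by_cases h : a = v.val
            · have hwa : ¬ S.Adj w v.val := fun hh => ha (h ▸ hh.symm)
              simp [adjMat, h, hwa]
            · simp [h]
        rw [hcolw]
        exact Submodule.sum_mem _ fun v _ =>
          Submodule.smul_mem _ _ (Submodule.subset_span ⟨Sum.inl v, rfl⟩)
      · rw [hcol ⟨w, hw⟩]
        exact Submodule.subset_span ⟨Sum.inr ⟨w, hw⟩, rfl⟩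
end
end

section
/- Let B be an S-atom. The following are equivalent: (1) every core vertex of B has degree 2; (2) |Supp(B)| = |Core(B)| + 1; (3) null(A(B)) = 1; (4) ν(B) = (n−1)/2 where n = |V(B)|; (5) α(B) = (n+1)/2. -/
open scoped Classical

open SimpleGraph Matrix

noncomputable section

variable {V : Type*}

section Aux

variable [Fintype V] {B : SimpleGraph V}

lemma kvanish {x : V → ℝ} (hx : adjMat B *ᵥ x = 0) {v : V} (hv : v ∉ suppSet B) : x v = 0 := by
  by_contra h; exact hv ⟨x, hx, h⟩

lemma adjMat_comm (B : SimpleGraph V) (a b : V) : adjMat B a b = adjMat B b a := by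
  simp [adjMat, adj_comm]

lemma disjSC (hatom : ∀ a b, B.Adj a b → ¬(a ∈ coreSet B ∧ b ∈ coreSet B)) :
    Disjoint (suppSet B) (coreSet B) := by
  rw [Set.disjoint_left]
  rintro v hvS ⟨u, huS, huv⟩
  exact hatom u v huv ⟨⟨v, hvS, huv.symm⟩, ⟨u, huS, huv⟩⟩

lemma edge_cases (hS : IsSTree B)
    (hatom : ∀ a b, B.Adj a b → ¬(a ∈ coreSet B ∧ b ∈ coreSet B))
    {a b : V} (h : B.Adj a b) :
    (a ∈ suppSet B ∧ b ∈ coreSet B) ∨ (a ∈ coreSet B ∧ b ∈ suppSet B) := by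
  have ha : a ∈ suppSet B ∪ coreSet B := hS.2 ▸ Set.mem_univ a
  have hb : b ∈ suppSet B ∪ coreSet B := hS.2 ▸ Set.mem_univ b
  rcases ha with haS | haC
  · exact Or.inl ⟨haS, ⟨a, haS, h⟩⟩
  · rcases hb with hbS | hbC
    · exact Or.inr ⟨haC, hbS⟩
    · exact absurd ⟨haC, hbC⟩ (hatom a b h)

lemma core_nbr_supp (hS : IsSTree B)
    (hatom : ∀ a b, B.Adj a b → ¬(a ∈ coreSet B ∧ b ∈ coreSet B))
    {v u : V} (hv : v ∈ coreSet B) (h : B.Adj v u) : u ∈ suppSet B := by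
  rcases edge_cases hS hatom h with ⟨hvS, _⟩ | ⟨_, huS⟩
  · exact absurd hv (Set.disjoint_left.mp (disjSC hatom) hvS)
  · exact huS

lemma core_two_nbrs {v : V} (hv : v ∈ coreSet B) :
    ∃ u1 u2, u1 ≠ u2 ∧ B.Adj v u1 ∧ B.Adj v u2 := by
  obtain ⟨u, ⟨x, hx, hxu⟩, huv⟩ := hv
  suffices h : ∃ w, B.Adj v w ∧ w ≠ u by
    obtain ⟨w, hw1, hw2⟩ := h
    exact ⟨w, u, hw2, hw1, huv.symm⟩
  by_contra hno
  push_neg at hno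
  have hrow : (adjMat B *ᵥ x) v = 0 := by rw [hx]; rfl
  have hsum : ∑ w : V, adjMat B v w * x w = 0 := hrow
  rw [Finset.sum_eq_single u] at hsum
  · have hA : adjMat B v u = 1 := by simp [adjMat, huv.symm]
    rw [hA, one_mul] at hsum; exact hxu hsum
  · intro w _ hwu
    have hna : ¬ B.Adj v w := fun hadj => hwu (hno w hadj)
    simp [adjMat, hna]
  · intro h; exact absurd (Finset.mem_univ u) h

/-- restricted sum helper -/
lemma sum_restrict (T : Set V) (g x : V → ℝ) (hvan : ∀ w, w ∉ T → x w = 0) :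
    ∑ t : ↥T, g t * x t = ∑ w : V, g w * x w := by
  rw [← Finset.sum_subtype (Set.toFinset T) (fun w => Set.mem_toFinset) (fun w => g w * x w)]
  exact Finset.sum_subset (Finset.subset_univ _)
    (fun w _ hw => by rw [hvan w (by simpa using hw), mul_zero])

lemma nullity_card (hS : IsSTree B)
    (hatom : ∀ a b, B.Adj a b → ¬(a ∈ coreSet B ∧ b ∈ coreSet B)) :
    (suppSet B).ncard = (coreSet B).ncard + nullity B := by
  classical
  set S := suppSet B with hSdef
  set C := coreSet B with hCdef
  set M : Matrix ↥C ↥S ℝ := (adjMat B).submatrix (fun c : ↥C => (c : V)) (fun s : ↥S => (s : V))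
    with hMdef
  have mva : ∀ (x : V → ℝ) (v : V), (adjMat B *ᵥ x) v = ∑ w : V, adjMat B v w * x w :=
    fun x v => rfl
  have hker_van : ∀ x : V → ℝ, adjMat B *ᵥ x = 0 → ∀ w, w ∉ S → x w = 0 :=
    fun x hx w hw => kvanish hx hw
  have hrestr : ∀ x : V → ℝ, adjMat B *ᵥ x = 0 →
      M *ᵥ (fun s : ↥S => x s) = 0 := by
    intro x hx
    funext c
    have h1 : (M *ᵥ fun s : ↥S => x s) c = ∑ s : ↥S, adjMat B c s * x s := rfl
    rw [h1, sum_restrict S (fun w => adjMat B c w) x (hker_van x hx)]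
    have h2 := congrFun hx (c : V)
    rw [mva] at h2
    exact h2
  let F : ↥(LinearMap.ker (adjMat B).mulVecLin) →ₗ[ℝ] ↥(LinearMap.ker M.mulVecLin) :=
    { toFun := fun x => ⟨fun s => x.1 s, by
        rw [LinearMap.mem_ker, Matrix.mulVecLin_apply]
        refine hrestr x.1 ?_
        have h := x.2
        rwa [LinearMap.mem_ker, Matrix.mulVecLin_apply] at h⟩
      map_add' := fun x y => rfl
      map_smul' := fun c x => rfl }
  have hFinj : Function.Injective F := by
    rintro ⟨x, hx⟩ ⟨y, hy⟩ hxy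
    have h1 : ∀ s : ↥S, x s = y s := fun s => congrFun (congrArg Subtype.val hxy) s
    rw [LinearMap.mem_ker, Matrix.mulVecLin_apply] at hx hy
    apply Subtype.ext
    funext v
    show x v = y v
    by_cases hv : v ∈ S
    · exact h1 ⟨v, hv⟩
    · rw [hker_van x hx v hv, hker_van y hy v hv]
  have hFsurj : Function.Surjective F := by
    rintro ⟨z, hz⟩
    rw [LinearMap.mem_ker, Matrix.mulVecLin_apply] at hz
    set x : V → ℝ := fun v => if h : v ∈ S then z ⟨v, h⟩ else 0 with hxdef
    have hvan : ∀ w, w ∉ S → x w = 0 := fun w hw => by simp [hxdef, hw]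
    have hxs : ∀ s : ↥S, x (s : V) = z s := by
      intro s
      rw [hxdef]
      simp [s.2]
    have hxker : adjMat B *ᵥ x = 0 := by
      funext v
      rw [mva, ← sum_restrict S (fun w => adjMat B v w) x hvan, Pi.zero_apply]
      by_cases hv : v ∈ C
      · have h2 := congrFun hz ⟨v, hv⟩
        rw [Pi.zero_apply] at h2
        rw [← h2]
        apply Finset.sum_congr rfl
        intro s _
        rw [hxs s]
        rfl
      · apply Finset.sum_eq_zero
        intro s _
        have hna : ¬ B.Adj v (s : V) := fun hadj => hv ⟨(s : V), s.2, hadj.symm⟩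
        simp [adjMat, hna]
    refine ⟨⟨x, by rw [LinearMap.mem_ker, Matrix.mulVecLin_apply]; exact hxker⟩, ?_⟩
    apply Subtype.ext
    funext s
    exact hxs s
  have hfr : nullity B = Module.finrank ℝ ↥(LinearMap.ker M.mulVecLin) :=
    (LinearEquiv.ofBijective F ⟨hFinj, hFsurj⟩).finrank_eq
  have hkerT : LinearMap.ker Mᵀ.mulVecLin = ⊥ := by
    rw [LinearMap.ker_eq_bot']
    intro y hy
    rw [Matrix.mulVecLin_apply] at hy
    set x : V → ℝ := fun v => if h : v ∈ C then y ⟨v, h⟩ else 0 with hxdef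
    have hvan : ∀ w, w ∉ C → x w = 0 := fun w hw => by simp [hxdef, hw]
    have hxc : ∀ c : ↥C, x (c : V) = y c := by
      intro c
      rw [hxdef]
      simp [c.2]
    have hxker : adjMat B *ᵥ x = 0 := by
      funext v
      rw [mva, ← sum_restrict C (fun w => adjMat B v w) x hvan, Pi.zero_apply]
      by_cases hv : v ∈ S
      · have h2 := congrFun hy ⟨v, hv⟩
        rw [Pi.zero_apply] at h2
        rw [← h2]
        apply Finset.sum_congr rfl
        intro c _
        rw [hxc c]
        show adjMat B v (c : V) * y c = Mᵀ ⟨v, hv⟩ c * y c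
        rw [Matrix.transpose_apply]
        show adjMat B v (c : V) * y c = adjMat B (c : V) v * y c
        rw [adjMat_comm]
      · apply Finset.sum_eq_zero
        intro c _
        have hna : ¬ B.Adj v (c : V) := fun hadj =>
          hv (core_nbr_supp hS hatom c.2 hadj.symm)
        simp [adjMat, hna]
    have hvanS : ∀ w, w ∉ S → x w = 0 := hker_van x hxker
    funext c
    have hcS : (c : V) ∉ S := Set.disjoint_right.mp (disjSC hatom) c.2
    have h3 := hvanS c hcS
    rw [hxc c] at h3
    exact h3
  have hrankT : Mᵀ.rank = Fintype.card ↥C := by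
    have h := LinearMap.finrank_range_add_finrank_ker Mᵀ.mulVecLin
    rw [hkerT, finrank_bot, add_zero, Module.finrank_fintype_fun_eq_card] at h
    exact h
  have hrankM : M.rank = Fintype.card ↥C := by rw [← Matrix.rank_transpose, hrankT]
  have hrn := LinearMap.finrank_range_add_finrank_ker M.mulVecLin
  rw [Module.finrank_fintype_fun_eq_card] at hrn
  have hfin : M.rank + Module.finrank ℝ ↥(LinearMap.ker M.mulVecLin) = Fintype.card ↥S := hrn
  rw [hrankM, ← hfr] at hfin
  have hS' : (S : Set V).ncard = Fintype.card ↥S := by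
    rw [← Nat.card_coe_set_eq, Nat.card_eq_fintype_card]
  have hC' : (C : Set V).ncard = Fintype.card ↥C := by
    rw [← Nat.card_coe_set_eq, Nat.card_eq_fintype_card]
  rw [hS', hC']
  omega

lemma sum_core_deg (hS : IsSTree B)
    (hatom : ∀ a b, B.Adj a b → ¬(a ∈ coreSet B ∧ b ∈ coreSet B)) :
    ∑ v ∈ (coreSet B).toFinset, (B.neighborSet v).ncard = Fintype.card V - 1 := by
  classical
  set P : Finset (V × V) :=
    Finset.univ.filter (fun p : V × V => B.Adj p.1 p.2 ∧ p.1 ∈ coreSet B) with hPdef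
  have step1 : P.card = ∑ v ∈ (coreSet B).toFinset, (B.neighborSet v).ncard := by
    rw [Finset.card_eq_sum_card_fiberwise
      (f := Prod.fst) (t := (coreSet B).toFinset)
      (fun p hp => by
        rw [Finset.mem_coe, Set.mem_toFinset]
        exact ((Finset.mem_filter.mp (Finset.mem_coe.mp hp)).2).2)]
    apply Finset.sum_congr rfl
    intro v hv
    rw [Set.mem_toFinset] at hv
    have : (B.neighborSet v).ncard = (B.neighborSet v).toFinset.card :=
      Set.ncard_eq_toFinset_card' _
    rw [this]
    apply Finset.card_bij (fun p _ => p.2)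
    · intro p hp
      simp only [hPdef, Finset.mem_filter, Finset.mem_univ, true_and] at hp
      rw [Set.mem_toFinset, SimpleGraph.mem_neighborSet]
      have h2 := hp.1.1
      rw [hp.2] at h2
      exact h2
    · intro p hp q hq hpq
      simp only [hPdef, Finset.mem_filter, Finset.mem_univ, true_and] at hp hq
      exact Prod.ext (hp.2.trans hq.2.symm) hpq
    · intro u hu
      rw [Set.mem_toFinset, SimpleGraph.mem_neighborSet] at hu
      refine ⟨(v, u), ?_, rfl⟩
      simp only [hPdef, Finset.mem_filter, Finset.mem_univ, true_and]
      exact ⟨⟨hu, hv⟩, trivial⟩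
  have step2 : P.card = B.edgeFinset.card := by
    apply Finset.card_bij (fun p _ => s(p.1, p.2))
    · intro p hp
      simp only [hPdef, Finset.mem_filter, Finset.mem_univ, true_and] at hp
      rw [mem_edgeFinset, SimpleGraph.mem_edgeSet]
      exact hp.1
    · intro p hp q hq hpq
      simp only [hPdef, Finset.mem_filter, Finset.mem_univ, true_and] at hp hq
      rw [Sym2.eq_iff] at hpq
      rcases hpq with ⟨h1, h2⟩ | ⟨h1, h2⟩
      · exact Prod.ext h1 h2
      · exfalso
        have hq2S : q.2 ∈ suppSet B := core_nbr_supp hS hatom hq.2 hq.1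
        rw [← h1] at hq2S
        exact Set.disjoint_left.mp (disjSC hatom) hq2S hp.2
    · intro e he
      rw [mem_edgeFinset] at he
      induction e with
      | _ a b =>
        have he' : B.Adj a b := (SimpleGraph.mem_edgeSet B).mp he
        rcases edge_cases hS hatom he' with ⟨haS, hbC⟩ | ⟨haC, hbS⟩
        · refine ⟨(b, a), ?_, Sym2.eq_swap⟩
          simp only [hPdef, Finset.mem_filter, Finset.mem_univ, true_and]
          exact ⟨he'.symm, hbC⟩
        · refine ⟨(a, b), ?_, rfl⟩
          simp only [hPdef, Finset.mem_filter, Finset.mem_univ, true_and]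
          exact ⟨he', haC⟩
  have hce := hS.1.card_edgeFinset
  omega

omit [Fintype V] in
lemma tree_par (hT : B.IsTree) :
    ∃ par : V → V, ∀ u v, B.Adj u v → par u = v ∨ par v = u := by
  classical
  have hne : Nonempty V := hT.isConnected.nonempty
  obtain ⟨r⟩ := hne
  have hup := hT.existsUnique_path
  set par : V → V := fun v => (hup v r).choose.getVert 1 with hpar
  refine ⟨par, ?_⟩
  intro u v h
  set p : B.Walk u r := (hup u r).choose with hpdef
  have hp : p.IsPath := (hup u r).choose_spec.1
  have hpuniq : ∀ q : B.Walk u r, q.IsPath → q = p := fun q hq => (hup u r).choose_spec.2 q hq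
  by_cases hv : v ∈ p.support
  · left
    set d : B.Walk v r := p.dropUntil v hv with hddef
    have hd : d.IsPath := hp.dropUntil hv
    have hud : u ∉ d.support := by
      intro hud
      have hne' : u ≠ v := h.ne
      have hutail : u ∈ d.support.tail := by
        have := d.support_eq_cons
        rw [this] at hud
        rcases List.mem_cons.mp hud with h1 | h1
        · exact absurd h1 hne'
        · exact h1
      have hsplit : p.support = (p.takeUntil v hv).support ++ d.support.tail := by
        conv_lhs => rw [← Walk.take_spec p hv]
        rw [Walk.support_append]
      have hnodup := hp.support_nodup
      rw [hsplit] at hnodup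
      exact (List.disjoint_of_nodup_append hnodup) (Walk.start_mem_support _) hutail
    have hq : (d.cons h).IsPath := hd.cons hud
    have := hpuniq (d.cons h) hq
    show p.getVert 1 = v
    rw [← this]
    simp [Walk.getVert_cons_succ]
  · right
    have hq : (p.cons h.symm).IsPath := hp.cons hv
    have := (hup v r).choose_spec.2 (p.cons h.symm) hq
    show (hup v r).choose.getVert 1 = u
    rw [← this]
    simp [Walk.getVert_cons_succ]

lemma exists_inj (hS : IsSTree B)
    (hatom : ∀ a b, B.Adj a b → ¬(a ∈ coreSet B ∧ b ∈ coreSet B)) :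
    ∃ f : V → V, (∀ v ∈ coreSet B, f v ∈ suppSet B ∧ B.Adj v (f v)) ∧
      Set.InjOn f (coreSet B) := by
  obtain ⟨par, hpar⟩ := tree_par hS.1
  have claim : ∀ v ∈ coreSet B, ∃ u, B.Adj v u ∧ par u = v := by
    intro v hv
    obtain ⟨u1, u2, hne, h1, h2⟩ := core_two_nbrs hv
    rcases hpar v u1 h1 with e1 | e1
    · rcases hpar v u2 h2 with e2 | e2
      · exact absurd (e1.symm.trans e2) hne
      · exact ⟨u2, h2, e2⟩
    · exact ⟨u1, h1, e1⟩
  classical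
  set f : V → V := fun v => if h : v ∈ coreSet B then (claim v h).choose else v with hf
  have hadj : ∀ v (h : v ∈ coreSet B), B.Adj v (f v) ∧ par (f v) = v := by
    intro v h
    have := (claim v h).choose_spec
    simpa [hf, h] using this
  refine ⟨f, fun v hv => ⟨core_nbr_supp hS hatom hv (hadj v hv).1, (hadj v hv).1⟩, ?_⟩
  intro v1 h1 v2 h2 heq
  have := (hadj v1 h1).2
  rw [heq, (hadj v2 h2).2] at this
  exact this.symm

lemma matching_num (hS : IsSTree B)
    (hatom : ∀ a b, B.Adj a b → ¬(a ∈ coreSet B ∧ b ∈ coreSet B)) :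
    matchingNumber B = (coreSet B).ncard := by
  classical
  obtain ⟨f, hfprop, hfinj⟩ := exists_inj hS hatom
  have hdisj := disjSC hatom
  -- the matching subgraph
  set M0 : B.Subgraph :=
    { verts := coreSet B ∪ f '' coreSet B
      Adj := fun a b => (a ∈ coreSet B ∧ b = f a) ∨ (b ∈ coreSet B ∧ a = f b)
      adj_sub := by
        rintro a b (⟨ha, rfl⟩ | ⟨hb, rfl⟩)
        · exact (hfprop a ha).2
        · exact ((hfprop b hb).2).symm
      edge_vert := by
        rintro a b (⟨ha, rfl⟩ | ⟨hb, rfl⟩)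
        · exact Or.inl ha
        · exact Or.inr ⟨b, hb, rfl⟩
      symm := by
        constructor
        rintro a b (⟨ha, rfl⟩ | ⟨hb, rfl⟩)
        · exact Or.inr ⟨ha, rfl⟩
        · exact Or.inl ⟨hb, rfl⟩ } with hM0
  have hfS : ∀ v ∈ coreSet B, f v ∉ coreSet B := by
    intro v hv
    exact Set.disjoint_left.mp hdisj (hfprop v hv).1
  have hmatch : M0.IsMatching := by
    rintro v (hv | ⟨w, hw, rfl⟩)
    · refine ⟨f v, Or.inl ⟨hv, rfl⟩, ?_⟩
      rintro y (⟨_, rfl⟩ | ⟨hy, rfl⟩)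
      · rfl
      · exact absurd hv (hfS y hy)
    · refine ⟨w, Or.inr ⟨hw, rfl⟩, ?_⟩
      rintro y (⟨hfw, _⟩ | ⟨hy, hy2⟩)
      · exact absurd hfw (hfS w hw)
      · exact hfinj hy hw hy2.symm
  have hedge : M0.edgeSet = (fun v => s(v, f v)) '' coreSet B := by
    ext e
    induction e with
    | _ a b =>
      simp only [SimpleGraph.Subgraph.mem_edgeSet, hM0, Set.mem_image]
      constructor
      · rintro (⟨ha, rfl⟩ | ⟨hb, rfl⟩)
        · exact ⟨a, ha, rfl⟩
        · exact ⟨b, hb, Sym2.eq_swap⟩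
      · rintro ⟨v, hv, he⟩
        rw [Sym2.eq_iff] at he
        rcases he with ⟨rfl, rfl⟩ | ⟨rfl, rfl⟩
        · exact Or.inl ⟨hv, rfl⟩
        · exact Or.inr ⟨hv, rfl⟩
  have hcount : M0.edgeSet.ncard = (coreSet B).ncard := by
    rw [hedge]
    apply Set.ncard_image_of_injOn
    intro v1 h1 v2 h2 heq
    rw [Sym2.eq_iff] at heq
    rcases heq with ⟨h3, _⟩ | ⟨h3, h4⟩
    · exact h3
    · rw [h3] at h1
      exact absurd h1 (Set.disjoint_left.mp hdisj (hfprop v2 h2).1)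
  -- upper bound
  have hub : ∀ n ∈ {n | ∃ M : B.Subgraph, M.IsMatching ∧ M.edgeSet.ncard = n},
      n ≤ (coreSet B).ncard := by
    rintro n ⟨M, hM, rfl⟩
    have hnev : Nonempty V := hS.1.isConnected.nonempty
    have hexC : ∀ e ∈ M.edgeSet, ∃ v, v ∈ coreSet B ∧ v ∈ e := by
      intro e he
      induction e with
      | _ a b =>
        rw [SimpleGraph.Subgraph.mem_edgeSet] at he
        rcases edge_cases hS hatom (M.adj_sub he) with ⟨_, hbC⟩ | ⟨haC, _⟩
        · exact ⟨b, hbC, Sym2.mem_mk_right a b⟩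
        · exact ⟨a, haC, Sym2.mem_mk_left a b⟩
    set g : Sym2 V → V := fun e =>
      if h : ∃ v, v ∈ coreSet B ∧ v ∈ e then h.choose else Classical.arbitrary V with hg
    have hgmem : ∀ e ∈ M.edgeSet, g e ∈ coreSet B ∧ g e ∈ e := by
      intro e he
      have h := hexC e he
      simp only [hg, dif_pos h]
      exact h.choose_spec
    have hother : ∀ e ∈ M.edgeSet, ∀ v ∈ e, ∃ w, e = s(v, w) ∧ M.Adj v w := by
      intro e he v hv
      induction e with
      | _ a b =>
        rw [SimpleGraph.Subgraph.mem_edgeSet] at he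
        rcases Sym2.mem_iff.mp hv with rfl | rfl
        · exact ⟨b, rfl, he⟩
        · exact ⟨a, Sym2.eq_swap, he.symm⟩
    have hInj : Set.InjOn g M.edgeSet := by
      intro e1 h1 e2 h2 heq
      obtain ⟨w1, he1, ha1⟩ := hother e1 h1 (g e1) (hgmem e1 h1).2
      obtain ⟨w2, he2, ha2⟩ := hother e2 h2 (g e2) (hgmem e2 h2).2
      rw [heq] at he1 ha1
      obtain ⟨w, _, huniq⟩ := hM (M.edge_vert ha1)
      have h12 : w1 = w2 := (huniq w1 ha1).trans (huniq w2 ha2).symm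
      rw [h12] at he1
      exact he1.trans he2.symm
    exact Set.ncard_le_ncard_of_injOn g (fun e he => (hgmem e he).1) hInj (Set.toFinite _)
  apply le_antisymm
  · exact csSup_le ⟨_, ⟨M0, hmatch, hcount⟩⟩ hub
  · exact le_csSup ⟨(coreSet B).ncard, hub⟩ ⟨M0, hmatch, hcount⟩

lemma indep_num (hS : IsSTree B)
    (hatom : ∀ a b, B.Adj a b → ¬(a ∈ coreSet B ∧ b ∈ coreSet B)) :
    indepNumber B = (suppSet B).ncard := by
  classical
  obtain ⟨f, hfprop, hfinj⟩ := exists_inj hS hatom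
  have hdisj := disjSC hatom
  have hcards : (suppSet B).ncard + (coreSet B).ncard = Fintype.card V := by
    rw [← Set.ncard_union_eq hdisj (Set.toFinite _) (Set.toFinite _), hS.2, Set.ncard_univ,
      Nat.card_eq_fintype_card]
  have hSind : ∀ a ∈ suppSet B, ∀ b ∈ suppSet B, ¬ B.Adj a b := by
    intro a ha b hb hab
    rcases edge_cases hS hatom hab with ⟨_, hbC⟩ | ⟨haC, _⟩
    · exact Set.disjoint_left.mp hdisj hb hbC
    · exact Set.disjoint_left.mp hdisj ha haC
  have hub : ∀ n ∈ {n | ∃ s : Set V, (∀ a ∈ s, ∀ b ∈ s, ¬ B.Adj a b) ∧ s.ncard = n},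
      n ≤ (suppSet B).ncard := by
    rintro n ⟨s, hind, rfl⟩
    set g : V → V := fun v => if v ∈ s then f v else v with hg
    have hgmem : ∀ v ∈ coreSet B, g v ∈ sᶜ := by
      intro v hv
      by_cases h : v ∈ s
      · simp only [hg, if_pos h, Set.mem_compl_iff]
        intro hfv
        exact hind v h (f v) hfv (hfprop v hv).2
      · simp only [hg, if_neg h, Set.mem_compl_iff]
        exact h
    have hginj : Set.InjOn g (coreSet B) := by
      intro v1 h1 v2 h2 heq
      have hne : ∀ a ∈ coreSet B, ∀ b ∈ coreSet B, f a ≠ b := by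
        intro a ha b hb h
        exact Set.disjoint_left.mp hdisj (h ▸ (hfprop a ha).1) hb
      simp only [hg] at heq
      by_cases ha : v1 ∈ s <;> by_cases hb : v2 ∈ s <;> simp only [if_pos, if_neg, ha, hb] at heq
      · exact hfinj h1 h2 heq
      · exact absurd heq (hne v1 h1 v2 h2)
      · exact absurd heq.symm (hne v2 h2 v1 h1)
      · exact heq
    have h1 : (coreSet B).ncard ≤ sᶜ.ncard :=
      Set.ncard_le_ncard_of_injOn g hgmem hginj (Set.toFinite _)
    have h2 : s.ncard + sᶜ.ncard = Fintype.card V := by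
      rw [Set.ncard_add_ncard_compl, Nat.card_eq_fintype_card]
    omega
  apply le_antisymm
  · exact csSup_le ⟨_, ⟨suppSet B, hSind, rfl⟩⟩ hub
  · exact le_csSup ⟨(suppSet B).ncard, hub⟩ ⟨suppSet B, hSind, rfl⟩


end Aux

/-- For an S-atom `B` on `n` vertices, the following are equivalent:
(1) every core vertex has degree 2; (2) `|Supp(B)| = |Core(B)| + 1`; (3) `null(A(B)) = 1`;
(4) `ν(B) = (n−1)/2`; (5) `α(B) = (n+1)/2`. -/
theorem stmt19 [Fintype V] (B : SimpleGraph V) (hS : IsSTree B)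
    (hatom : ∀ a b, B.Adj a b → ¬(a ∈ coreSet B ∧ b ∈ coreSet B)) :
    List.TFAE
      [ ∀ u ∈ coreSet B, (B.neighborSet u).ncard = 2,
        (suppSet B).ncard = (coreSet B).ncard + 1,
        nullity B = 1,
        2 * matchingNumber B = Fintype.card V - 1,
        2 * indepNumber B = Fintype.card V + 1 ] := by
  classical
  have hdisj := disjSC hatom
  have hn1 : 1 ≤ Fintype.card V := Fintype.card_pos_iff.mpr hS.1.isConnected.nonempty
  have hcards : (suppSet B).ncard + (coreSet B).ncard = Fintype.card V := by
    rw [← Set.ncard_union_eq hdisj (Set.toFinite _) (Set.toFinite _), hS.2, Set.ncard_univ,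
      Nat.card_eq_fintype_card]
  have hnull := nullity_card hS hatom
  have hsum := sum_core_deg hS hatom
  have hcfin : (coreSet B).toFinset.card = (coreSet B).ncard :=
    (Set.ncard_eq_toFinset_card' _).symm
  have hnu := matching_num hS hatom
  have hal := indep_num hS hatom
  have hdeg2 : ∀ v ∈ coreSet B, 2 ≤ (B.neighborSet v).ncard := by
    intro v hv
    obtain ⟨u1, u2, hne, h1, h2⟩ := core_two_nbrs hv
    have hsub : {u1, u2} ⊆ B.neighborSet v := by
      intro w hw
      rcases hw with rfl | rfl
      · exact h1
      · exact h2
    calc 2 = ({u1, u2} : Set V).ncard := (Set.ncard_pair hne).symm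
    _ ≤ (B.neighborSet v).ncard := Set.ncard_le_ncard hsub (Set.toFinite _)
  tfae_have 1 → 2 := by
    intro h1
    have hs2 : ∑ v ∈ (coreSet B).toFinset, (B.neighborSet v).ncard = 2 * (coreSet B).ncard := by
      rw [Finset.sum_congr rfl (fun v hv => h1 v (Set.mem_toFinset.mp hv)),
        Finset.sum_const, smul_eq_mul, hcfin, mul_comm]
    omega
  tfae_have 2 → 1 := by
    intro h2 v hv
    have hs2 : ∑ v ∈ (coreSet B).toFinset, (B.neighborSet v).ncard =
        ∑ v ∈ (coreSet B).toFinset, (((B.neighborSet v).ncard - 2) + 2) :=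
      Finset.sum_congr rfl (fun u hu => by
        have := hdeg2 u (Set.mem_toFinset.mp hu)
        omega)
    rw [Finset.sum_add_distrib, Finset.sum_const, smul_eq_mul] at hs2
    have hzero : ∑ u ∈ (coreSet B).toFinset, ((B.neighborSet u).ncard - 2) = 0 := by omega
    have hv0 := (Finset.sum_eq_zero_iff.mp hzero) v (Set.mem_toFinset.mpr hv)
    have := hdeg2 v hv
    omega
  tfae_have 2 ↔ 3 := by omega
  tfae_have 2 ↔ 4 := by rw [hnu]; omega
  tfae_have 2 ↔ 5 := by rw [hal]; omega
  tfae_finish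
end
end
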